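/- arXiv:2207.02713 — 6 statements merged into one kernel-verified Lean document; each statement's English description precedes it below -/
import Mathlib

section
/- Let λ_{μ,ν}(x) = (ν − (μ+1)/2 + √((ν − (μ+1)/2)² + x²))/x for x > 0. Then for all x > 0: (1) if ν ≥ 0 then I_{ν−1}(x)/I_ν(x) < λ_{−1,ν}(x) = (ν + √(ν² + x²))/x; (2) if ν ≥ 1/2 then I_{ν−1}(x)/I_ν(x) > λ_{0,ν}(x) = (ν − 1/2 + √((ν − 1/2)² + x²))/x; (3) if ν ≥ 0 then I_{ν−1}(x)/I_ν(x) > λ_{1,ν}(x) = (ν − 1 + √((ν − 1)² + x²))/x. -/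
/-- The modified Bessel function of the first kind,
`I_ν(x) = ∑_{k=0}^∞ (x/2)^{2k+ν} / (k! Γ(k+ν+1))`
(here `1/Γ` vanishes at nonpositive integer arguments, since `Real.Gamma` is `0` there). -/
noncomputable def besselI (ν x : ℝ) : ℝ :=
  ∑' k : ℕ, (x / 2) ^ (2 * (k : ℝ) + ν) / ((Nat.factorial k : ℝ) * Real.Gamma ((k : ℝ) + ν + 1))

open Finset


/-- Rising factorial `t (t+1) ⋯ (t+n-1)`. -/
noncomputable def asc (t : ℝ) : ℕ → ℝ
  | 0 => 1
  | n + 1 => asc t n * (t + n)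

@[simp] lemma asc_zero (t : ℝ) : asc t 0 = 1 := rfl

lemma asc_succ (t : ℝ) (n : ℕ) : asc t (n + 1) = asc t n * (t + n) := rfl

lemma asc_succ' (t : ℝ) (n : ℕ) : asc t (n + 1) = t * asc (t + 1) n := by
  induction n with
  | zero => simp [asc]
  | succ n ih =>
      rw [asc_succ, ih, asc_succ]
      push_cast; ring

lemma asc_pos {t : ℝ} (ht : 0 < t) (n : ℕ) : 0 < asc t n := by
  induction n with
  | zero => norm_num [asc]
  | succ n ih => rw [asc_succ]; positivity

/-- `Γ(t+n) = Γ(t) * asc t n` for `t > 0`. -/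
lemma Gamma_add_nat {t : ℝ} (ht : 0 < t) (n : ℕ) :
    Real.Gamma (t + n) = Real.Gamma t * asc t n := by
  induction n with
  | zero => simp [asc]
  | succ n ih =>
      have h1 : t + (n + 1 : ℕ) = (t + n) + 1 := by push_cast; ring
      have h2 : t + (n : ℝ) ≠ 0 := by positivity
      rw [h1, Real.Gamma_add_one h2, ih, asc_succ]; ring

/-- reflection: `asc (-t) n = (-1)^n * asc (t - n + 1) n`. -/
lemma asc_neg (t : ℝ) (n : ℕ) : asc (-t) n = (-1) ^ n * asc (t - n + 1) n := by
  induction n generalizing t with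
  | zero => simp [asc]
  | succ n ih =>
      rw [asc_succ']
      have h3 : (-t + 1) = -(t - 1) := by ring
      rw [h3, ih (t - 1)]
      have h2 : t - ((n + 1 : ℕ) : ℝ) + 1 = t - n := by push_cast; ring
      rw [h2, asc_succ]
      have h6 : (t - 1) - (n : ℝ) + 1 = t - n := by ring
      rw [h6]
      push_cast; ring

/-- Chu–Vandermonde for rising factorials. -/
lemma asc_vandermonde (n : ℕ) (x y : ℝ) :
    ∑ k ∈ range (n + 1), (n.choose k : ℝ) * asc x k * asc y (n - k) = asc (x + y) n := by
  induction n generalizing x y with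
  | zero => simp [asc]
  | succ n ih =>
      have hsplit := Finset.sum_range_succ'
        (fun k => ((n+1).choose k : ℝ) * asc x k * asc y (n + 1 - k)) (n + 1)
      rw [hsplit]
      have hg := Finset.sum_range_succ'
        (fun k => ((n).choose k : ℝ) * asc x k * asc y (n + 1 - k)) (n + 1)
      have hgtop : ∑ k ∈ range (n + 2), ((n).choose k : ℝ) * asc x k * asc y (n + 1 - k)
          = ∑ k ∈ range (n + 1), ((n).choose k : ℝ) * asc x k * asc y (n + 1 - k) := by
        rw [Finset.sum_range_succ]; simp
      -- pascal split
      have hpas : ∀ k, (((n+1).choose (k+1) : ℕ) : ℝ) = (n.choose k : ℝ) + (n.choose (k+1) : ℝ) := by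
        intro k; rw [Nat.choose_succ_succ]; push_cast; ring
      have hmain : ∑ k ∈ range (n + 1),
            ((n+1).choose (k+1) : ℝ) * asc x (k+1) * asc y (n + 1 - (k+1))
          = (∑ k ∈ range (n + 1), (n.choose k : ℝ) * (asc x k * (x + k)) * asc y (n - k))
            + (∑ k ∈ range (n + 1), (n.choose (k+1) : ℝ) * asc x (k+1) * asc y (n - k)) := by
        rw [← Finset.sum_add_distrib]
        refine Finset.sum_congr rfl fun k hk => ?_
        have : n + 1 - (k + 1) = n - k := by omega
        rw [this, hpas k, asc_succ]; ring
      rw [hmain]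
      have hsecond : ∑ k ∈ range (n + 1), (n.choose (k+1) : ℝ) * asc x (k+1) * asc y (n - k)
          = (∑ k ∈ range (n + 1), ((n).choose k : ℝ) * asc x k * asc y (n + 1 - k))
            - ((n).choose 0 : ℝ) * asc x 0 * asc y (n + 1) := by
        rw [← hgtop, hg]
        have : ∀ k, n + 1 - (k + 1) = n - k := by intro k; omega
        simp only [this, Nat.sub_zero]
        ring
      rw [hsecond]
      have hfin : ∑ k ∈ range (n + 1), ((n).choose k : ℝ) * asc x k * asc y (n + 1 - k)
          = ∑ k ∈ range (n + 1), ((n).choose k : ℝ) * asc x k * (asc y (n - k) * (y + (n - k : ℕ))) := by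
        refine Finset.sum_congr rfl fun k hk => ?_
        have hk' : k ≤ n := by simpa [Nat.lt_succ_iff] using hk
        have h1 : n + 1 - k = (n - k) + 1 := by omega
        rw [h1, asc_succ]
      rw [hfin]
      have hcomb : (∑ k ∈ range (n + 1), (n.choose k : ℝ) * (asc x k * (x + k)) * asc y (n - k))
            + ∑ k ∈ range (n + 1), ((n).choose k : ℝ) * asc x k * (asc y (n - k) * (y + (n - k : ℕ)))
          = (x + y + n) * ∑ k ∈ range (n + 1), ((n).choose k : ℝ) * asc x k * asc y (n - k) := by
        rw [Finset.mul_sum, ← Finset.sum_add_distrib]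
        refine Finset.sum_congr rfl fun k hk => ?_
        have hk' : k ≤ n := by simpa [Nat.lt_succ_iff] using hk
        have hc : ((n - k : ℕ) : ℝ) = (n : ℝ) - k := by
          rw [Nat.cast_sub hk']
        rw [hc]; ring
      have hz : (((n+1).choose 0 : ℕ) : ℝ) * asc x 0 * asc y (n + 1 - 0)
          = ((n).choose 0 : ℝ) * asc x 0 * asc y (n + 1) := by simp
      rw [hz]
      rw [ih] at hcomb
      have hxy : asc (x + y) (n + 1) = asc (x + y) n * (x + y + n) := asc_succ _ n
      rw [hxy]
      linear_combination hcomb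

lemma asc_reflect (s : ℝ) (m : ℕ) : asc s m = (-1) ^ m * asc (-s - m + 1) m := by
  have h := asc_neg (-s) m
  simpa using h

/-- mixed Chu–Vandermonde. -/
lemma asc_vandermonde' (n : ℕ) (x y : ℝ) :
    ∑ k ∈ range (n + 1), (n.choose k : ℝ) * asc (x + k) (n - k) * asc (y + (n - k : ℕ)) k
      = asc (x + y + n - 1) n := by
  have key : ∀ k ∈ range (n + 1),
      (n.choose k : ℝ) * asc (x + k) (n - k) * asc (y + (n - k : ℕ)) k
        = (-1) ^ n * ((n.choose k : ℝ) * asc (1 - y - n) k * asc (1 - x - n) (n - k)) := by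
    intro k hk
    have hk' : k ≤ n := by simpa [Nat.lt_succ_iff] using hk
    have hc : ((n - k : ℕ) : ℝ) = (n : ℝ) - k := by rw [Nat.cast_sub hk']
    have h1 : asc (x + k) (n - k) = (-1) ^ (n - k) * asc (1 - x - n) (n - k) := by
      rw [asc_reflect (x + k) (n - k), hc]
      ring_nf
    have h2 : asc (y + (n - k : ℕ)) k = (-1) ^ k * asc (1 - y - n) k := by
      rw [asc_reflect (y + (n - k : ℕ)) k, hc]
      ring_nf
    rw [h1, h2]
    have hpow : (-1 : ℝ) ^ (n - k) * (-1) ^ k = (-1) ^ n := by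
      rw [← pow_add]; congr 1; omega
    calc (n.choose k : ℝ) * ((-1) ^ (n - k) * asc (1 - x - n) (n - k))
          * ((-1) ^ k * asc (1 - y - n) k)
        = ((-1 : ℝ) ^ (n - k) * (-1) ^ k) *
            ((n.choose k : ℝ) * asc (1 - y - n) k * asc (1 - x - n) (n - k)) := by ring
      _ = _ := by rw [hpow]
  rw [Finset.sum_congr rfl key, ← Finset.mul_sum, asc_vandermonde]
  have h3 : (1 - y - n) + (1 - x - n) = -(x + y + 2 * n - 2) := by push_cast; ring
  rw [h3, asc_neg]
  have h4 : x + y + 2 * (n : ℝ) - 2 - n + 1 = x + y + n - 1 := by push_cast; ring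
  rw [h4, ← mul_assoc]
  have h5 : (-1:ℝ)^n * (-1)^n = 1 := by rw [← pow_add]; exact Even.neg_one_pow ⟨n, rfl⟩
  rw [h5, one_mul]

lemma S_closed (n : ℕ) (μ ν : ℝ) (hμ : -1 < μ) (hν : -1 < ν) (hs : -1 < μ + ν) :
    ∑ k ∈ range (n + 1),
        (1 / ((k.factorial : ℝ) * Real.Gamma (k + μ + 1))) *
          (1 / (((n - k).factorial : ℝ) * Real.Gamma ((n - k : ℕ) + ν + 1)))
      = Real.Gamma (2 * n + μ + ν + 1) /
          ((n.factorial : ℝ) * Real.Gamma (n + μ + 1) * Real.Gamma (n + ν + 1) *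
            Real.Gamma (n + μ + ν + 1)) := by
  have hμ0 : ∀ k : ℕ, (0:ℝ) < (k : ℝ) + μ + 1 := fun k => by
    have : (0:ℝ) ≤ k := Nat.cast_nonneg k; linarith
  have hν0 : ∀ k : ℕ, (0:ℝ) < (k : ℝ) + ν + 1 := fun k => by
    have : (0:ℝ) ≤ k := Nat.cast_nonneg k; linarith
  have hterm : ∀ k ∈ range (n + 1),
      (1 / ((k.factorial : ℝ) * Real.Gamma (k + μ + 1))) *
          (1 / (((n - k).factorial : ℝ) * Real.Gamma ((n - k : ℕ) + ν + 1)))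
        = ((n.choose k : ℝ) * asc (μ + 1 + k) (n - k) * asc (ν + 1 + (n - k : ℕ)) k) /
            ((n.factorial : ℝ) * Real.Gamma (n + μ + 1) * Real.Gamma (n + ν + 1)) := by
    intro k hk
    have hk' : k ≤ n := by simpa [Nat.lt_succ_iff] using hk
    have hc : ((n - k : ℕ) : ℝ) = (n : ℝ) - k := by rw [Nat.cast_sub hk']
    have e1 : Real.Gamma (n + μ + 1) = Real.Gamma (k + μ + 1) * asc (μ + 1 + k) (n - k) := by
      have := Gamma_add_nat (t := (k : ℝ) + μ + 1) (hμ0 k) (n - k)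
      have harg : (k : ℝ) + μ + 1 + ((n - k : ℕ) : ℝ) = (n : ℝ) + μ + 1 := by
        rw [hc]; ring
      rw [harg] at this
      rw [this]
      have : (k : ℝ) + μ + 1 = μ + 1 + k := by ring
      rw [this]
    have e2 : Real.Gamma (n + ν + 1)
        = Real.Gamma ((n - k : ℕ) + ν + 1) * asc (ν + 1 + (n - k : ℕ)) k := by
      have := Gamma_add_nat (t := ((n - k : ℕ) : ℝ) + ν + 1) (hν0 _) k
      have harg : ((n - k : ℕ) : ℝ) + ν + 1 + (k : ℝ) = (n : ℝ) + ν + 1 := by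
        rw [hc]; ring
      rw [harg] at this
      rw [this]
      have : ((n - k : ℕ) : ℝ) + ν + 1 = ν + 1 + ((n - k : ℕ) : ℝ) := by ring
      rw [this]
    have e3 : (n.factorial : ℝ) = (n.choose k : ℝ) * k.factorial * (n - k).factorial := by
      rw [← Nat.choose_mul_factorial_mul_factorial hk']
      push_cast; ring
    have hΓk : Real.Gamma ((k : ℝ) + μ + 1) ≠ 0 := ne_of_gt (Real.Gamma_pos_of_pos (hμ0 k))
    have hΓnk : Real.Gamma (((n - k : ℕ)) + ν + 1) ≠ 0 := ne_of_gt (Real.Gamma_pos_of_pos (hν0 _))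
    have hkf : ((k.factorial : ℝ)) ≠ 0 := by positivity
    have hnkf : (((n - k).factorial : ℝ)) ≠ 0 := by positivity
    have hch : (n.choose k : ℝ) ≠ 0 := by
      exact_mod_cast (Nat.choose_pos hk').ne'
    have ha1 : asc (μ + 1 + k) (n - k) ≠ 0 := by
      refine ne_of_gt (asc_pos ?_ _)
      have : (0:ℝ) ≤ k := Nat.cast_nonneg k; linarith
    have ha2 : asc (ν + 1 + (n - k : ℕ)) k ≠ 0 := by
      refine ne_of_gt (asc_pos ?_ _)
      have : (0:ℝ) ≤ ((n - k : ℕ) : ℝ) := Nat.cast_nonneg _; linarith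
    have hnf : ((n.factorial : ℝ)) ≠ 0 := by positivity
    have hΓnμ : Real.Gamma ((n:ℝ) + μ + 1) ≠ 0 := ne_of_gt (Real.Gamma_pos_of_pos (hμ0 n))
    have hΓnν : Real.Gamma ((n:ℝ) + ν + 1) ≠ 0 := ne_of_gt (Real.Gamma_pos_of_pos (hν0 n))
    rw [div_mul_div_comm, one_mul]
    rw [div_eq_div_iff (mul_ne_zero (mul_ne_zero hkf hΓk) (mul_ne_zero hnkf hΓnk))
      (mul_ne_zero (mul_ne_zero hnf hΓnμ) hΓnν)]
    rw [e3, e1, e2]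
    ring
  rw [Finset.sum_congr rfl hterm, ← Finset.sum_div]
  have hvdm := asc_vandermonde' n (μ + 1) (ν + 1)
  rw [hvdm]
  have e4 : Real.Gamma (2 * n + μ + ν + 1)
      = Real.Gamma (n + μ + ν + 1) * asc (μ + 1 + (ν + 1) + n - 1) n := by
    have ht : (0:ℝ) < (n : ℝ) + μ + ν + 1 := by
      have : (0:ℝ) ≤ n := Nat.cast_nonneg n; linarith
    have := Gamma_add_nat (t := (n : ℝ) + μ + ν + 1) ht n
    have harg : (n : ℝ) + μ + ν + 1 + (n : ℝ) = 2 * n + μ + ν + 1 := by ring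
    rw [harg] at this
    rw [this]
    have : (n : ℝ) + μ + ν + 1 = μ + 1 + (ν + 1) + n - 1 := by ring
    rw [this]
  rw [e4]
  have hΓs : Real.Gamma ((n : ℝ) + μ + ν + 1) ≠ 0 := by
    apply ne_of_gt (Real.Gamma_pos_of_pos _)
    have : (0:ℝ) ≤ n := Nat.cast_nonneg n; linarith
  have h5 : ((n.factorial : ℝ)) ≠ 0 := by positivity
  have h6 : Real.Gamma ((n : ℝ) + μ + 1) ≠ 0 := ne_of_gt (Real.Gamma_pos_of_pos (by
    have : (0:ℝ) ≤ n := Nat.cast_nonneg n; linarith))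
  have h7 : Real.Gamma ((n : ℝ) + ν + 1) ≠ 0 := ne_of_gt (Real.Gamma_pos_of_pos (by
    have : (0:ℝ) ≤ n := Nat.cast_nonneg n; linarith))
  field_simp

noncomputable def besselG (a ν : ℝ) : ℝ :=
  ∑' k : ℕ, a ^ (2 * k) / ((Nat.factorial k : ℝ) * Real.Gamma ((k : ℝ) + ν + 1))

lemma besselG_term_nonneg {a : ℝ} (ha : 0 < a) {ν : ℝ} (hν : -1 ≤ ν) (k : ℕ) :
    0 ≤ a ^ (2 * k) / ((Nat.factorial k : ℝ) * Real.Gamma ((k : ℝ) + ν + 1)) := by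
  have h1 : (0:ℝ) ≤ (k : ℝ) + ν + 1 := by
    have : (0:ℝ) ≤ k := Nat.cast_nonneg k; linarith
  have := Real.Gamma_nonneg_of_nonneg h1
  positivity

lemma besselG_summable {a : ℝ} (ha : 0 < a) {ν : ℝ} (hν : -1 ≤ ν) :
    Summable (fun k : ℕ => a ^ (2 * k) / ((Nat.factorial k : ℝ) * Real.Gamma ((k : ℝ) + ν + 1))) := by
  apply summable_of_ratio_norm_eventually_le (r := 1/2) (by norm_num)
  have hev : ∀ᶠ k : ℕ in Filter.atTop, 1 ≤ k ∧ 2 * a ^ 2 ≤ ((k:ℝ) + 1) * ((k:ℝ) + ν + 1) := by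
    have h1 : ∀ᶠ k : ℕ in Filter.atTop, 1 ≤ k := Filter.eventually_atTop.2 ⟨1, fun k hk => hk⟩
    have h2 : ∀ᶠ k : ℕ in Filter.atTop, 2 * a ^ 2 ≤ ((k:ℝ) + 1) * ((k:ℝ) + ν + 1) := by
      refine Filter.eventually_atTop.2 ⟨⌈2 * a ^ 2⌉₊ + 1, fun k hk => ?_⟩
      have hk1 : (⌈2 * a ^ 2⌉₊ : ℝ) ≤ (k : ℝ) := by exact_mod_cast le_trans (Nat.le_succ _) hk
      have hk2 : 2 * a ^ 2 ≤ (k : ℝ) := le_trans (Nat.le_ceil _) hk1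
      have hk0 : (1:ℝ) ≤ (k:ℝ) := by
        have : (1:ℕ) ≤ k := le_trans (Nat.le_add_left 1 _) hk
        exact_mod_cast this
      nlinarith [sq_nonneg a]
    exact h1.and h2
  filter_upwards [hev] with k hk
  obtain ⟨hk1, hk2⟩ := hk
  have hpos : (0:ℝ) < (k : ℝ) + ν + 1 := by
    have : (1:ℝ) ≤ (k:ℝ) := by exact_mod_cast hk1
    linarith
  have hrec : Real.Gamma (((k+1 : ℕ) : ℝ) + ν + 1) = ((k:ℝ) + ν + 1) * Real.Gamma ((k:ℝ) + ν + 1) := by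
    have harg : ((k+1 : ℕ) : ℝ) + ν + 1 = ((k:ℝ) + ν + 1) + 1 := by push_cast; ring
    rw [harg, Real.Gamma_add_one (ne_of_gt hpos)]
  have hΓpos : 0 < Real.Gamma ((k:ℝ) + ν + 1) := Real.Gamma_pos_of_pos hpos
  have hfact : ((k+1 : ℕ).factorial : ℝ) = ((k:ℝ)+1) * (k.factorial : ℝ) := by
    rw [Nat.factorial_succ]; push_cast; ring
  have heq : a ^ (2 * (k+1)) / (((k+1 : ℕ).factorial : ℝ) * Real.Gamma (((k+1:ℕ):ℝ) + ν + 1))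
      = (a ^ (2*k) / ((k.factorial : ℝ) * Real.Gamma ((k:ℝ) + ν + 1)))
        * (a ^ 2 / (((k:ℝ)+1) * ((k:ℝ) + ν + 1))) := by
    rw [hrec, hfact]
    have : 2 * (k+1) = 2*k + 2 := by ring
    rw [this, pow_add]
    have hkf : (0:ℝ) < (k.factorial : ℝ) := by positivity
    field_simp
  rw [heq]
  have habs : ∀ b : ℝ, ‖b‖ = |b| := fun b => rfl
  rw [Real.norm_eq_abs, Real.norm_eq_abs, abs_mul]
  have hb : |a ^ 2 / (((k:ℝ)+1) * ((k:ℝ) + ν + 1))| ≤ 1/2 := by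
    rw [abs_of_nonneg (by positivity)]
    rw [div_le_iff₀ (by positivity)]
    nlinarith
  calc |a ^ (2*k) / ((k.factorial : ℝ) * Real.Gamma ((k:ℝ) + ν + 1))|
        * |a ^ 2 / (((k:ℝ)+1) * ((k:ℝ) + ν + 1))|
      ≤ |a ^ (2*k) / ((k.factorial : ℝ) * Real.Gamma ((k:ℝ) + ν + 1))| * (1/2) := by
        exact mul_le_mul_of_nonneg_left hb (abs_nonneg _)
    _ = 1/2 * |a ^ (2*k) / ((k.factorial : ℝ) * Real.Gamma ((k:ℝ) + ν + 1))| := by ring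

lemma besselG_pos {a : ℝ} (ha : 0 < a) {ν : ℝ} (hν : -1 < ν) : 0 < besselG a ν := by
  apply Summable.tsum_pos (besselG_summable ha (le_of_lt hν)) (besselG_term_nonneg ha (le_of_lt hν)) 0
  have h0 : (0:ℝ) < (0:ℕ) + ν + 1 := by push_cast; linarith
  have := Real.Gamma_pos_of_pos h0
  simp only [Nat.cast_zero] at this ⊢
  positivity

lemma besselI_eq {x : ℝ} (hx : 0 < x) (ν : ℝ) :
    besselI ν x = (x/2) ^ ν * besselG (x/2) ν := by
  unfold besselI besselG
  rw [← tsum_mul_left]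
  refine tsum_congr fun k => ?_
  have ha : (0:ℝ) < x/2 := by linarith
  have h1 : (2 : ℝ) * (k : ℝ) + ν = ((2*k : ℕ) : ℝ) + ν := by push_cast; ring
  rw [h1, Real.rpow_add ha, Real.rpow_natCast]
  field_simp

/-- Cauchy product formula with closed-form coefficients. -/
lemma besselG_mul {a : ℝ} (ha : 0 < a) {μ ν : ℝ} (hμ : -1 < μ) (hν : -1 < ν) (hs : -1 < μ + ν) :
    besselG a μ * besselG a ν
      = ∑' n : ℕ, a ^ (2*n) * (Real.Gamma (2 * n + μ + ν + 1) /
          ((n.factorial : ℝ) * Real.Gamma (n + μ + 1) * Real.Gamma (n + ν + 1) *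
            Real.Gamma (n + μ + ν + 1))) := by
  unfold besselG
  have hf : Summable fun k : ℕ =>
      ‖a ^ (2 * k) / ((Nat.factorial k : ℝ) * Real.Gamma ((k : ℝ) + μ + 1))‖ := by
    refine Summable.congr (besselG_summable ha (le_of_lt hμ)) fun k => ?_
    rw [Real.norm_eq_abs, abs_of_nonneg (besselG_term_nonneg ha (le_of_lt hμ) k)]
  have hg : Summable fun k : ℕ =>
      ‖a ^ (2 * k) / ((Nat.factorial k : ℝ) * Real.Gamma ((k : ℝ) + ν + 1))‖ := by
    refine Summable.congr (besselG_summable ha (le_of_lt hν)) fun k => ?_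
    rw [Real.norm_eq_abs, abs_of_nonneg (besselG_term_nonneg ha (le_of_lt hν) k)]
  rw [tsum_mul_tsum_eq_tsum_sum_antidiagonal_of_summable_norm hf hg]
  refine tsum_congr fun n => ?_
  rw [Finset.Nat.sum_antidiagonal_eq_sum_range_succ_mk]
  have hterm : ∀ k ∈ Finset.range (n+1),
      a ^ (2 * k) / ((Nat.factorial k : ℝ) * Real.Gamma ((k : ℝ) + μ + 1)) *
        (a ^ (2 * (n - k)) / ((Nat.factorial (n-k) : ℝ) * Real.Gamma (((n - k : ℕ) : ℝ) + ν + 1)))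
      = a ^ (2*n) * ((1 / ((k.factorial : ℝ) * Real.Gamma (k + μ + 1))) *
          (1 / (((n - k).factorial : ℝ) * Real.Gamma ((n - k : ℕ) + ν + 1)))) := by
    intro k hk
    have hk' : k ≤ n := by simpa [Nat.lt_succ_iff] using hk
    have hpow : a ^ (2*k) * a ^ (2*(n-k)) = a ^ (2*n) := by
      rw [← pow_add]; congr 1; omega
    rw [div_mul_div_comm, ← hpow]
    ring
  rw [Finset.sum_congr rfl hterm, ← Finset.mul_sum, S_closed n μ ν hμ hν hs]

lemma besselG_mul_summable {a : ℝ} (ha : 0 < a) {μ ν : ℝ} (hμ : -1 < μ) (hν : -1 < ν)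
    (hs : -1 < μ + ν) :
    Summable (fun n : ℕ => a ^ (2*n) * (Real.Gamma (2 * n + μ + ν + 1) /
          ((n.factorial : ℝ) * Real.Gamma (n + μ + 1) * Real.Gamma (n + ν + 1) *
            Real.Gamma (n + μ + ν + 1)))) := by
  have hf : Summable fun k : ℕ =>
      ‖a ^ (2 * k) / ((Nat.factorial k : ℝ) * Real.Gamma ((k : ℝ) + μ + 1))‖ := by
    refine Summable.congr (besselG_summable ha (le_of_lt hμ)) fun k => ?_
    rw [Real.norm_eq_abs, abs_of_nonneg (besselG_term_nonneg ha (le_of_lt hμ) k)]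
  have hg : Summable fun k : ℕ =>
      ‖a ^ (2 * k) / ((Nat.factorial k : ℝ) * Real.Gamma ((k : ℝ) + ν + 1))‖ := by
    refine Summable.congr (besselG_summable ha (le_of_lt hν)) fun k => ?_
    rw [Real.norm_eq_abs, abs_of_nonneg (besselG_term_nonneg ha (le_of_lt hν) k)]
  have hsum := (summable_norm_sum_mul_antidiagonal_of_summable_norm hf hg).of_norm
  refine Summable.congr hsum fun n => ?_
  rw [Finset.Nat.sum_antidiagonal_eq_sum_range_succ_mk]
  have hterm : ∀ k ∈ Finset.range (n+1),
      a ^ (2 * k) / ((Nat.factorial k : ℝ) * Real.Gamma ((k : ℝ) + μ + 1)) *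
        (a ^ (2 * (n - k)) / ((Nat.factorial (n-k) : ℝ) * Real.Gamma (((n - k : ℕ) : ℝ) + ν + 1)))
      = a ^ (2*n) * ((1 / ((k.factorial : ℝ) * Real.Gamma (k + μ + 1))) *
          (1 / (((n - k).factorial : ℝ) * Real.Gamma ((n - k : ℕ) + ν + 1)))) := by
    intro k hk
    have hk' : k ≤ n := by simpa [Nat.lt_succ_iff] using hk
    have hpow : a ^ (2*k) * a ^ (2*(n-k)) = a ^ (2*n) := by
      rw [← pow_add]; congr 1; omega
    rw [div_mul_div_comm, ← hpow]
    ring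
  rw [Finset.sum_congr rfl hterm, ← Finset.mul_sum, S_closed n μ ν hμ hν hs]

lemma besselG_rec {a : ℝ} (ha : 0 < a) {ν : ℝ} (hν : 0 ≤ ν) :
    besselG a (ν - 1) = a^2 * besselG a (ν + 1) + ν * besselG a ν := by
  have hd_succ : ∀ k : ℕ,
      a ^ (2*(k+1)) * ((k+1 : ℕ) : ℝ) / (((k+1 : ℕ).factorial : ℝ) * Real.Gamma (((k+1:ℕ):ℝ) + ν + 1))
      = a^2 * (a ^ (2*k) / ((k.factorial : ℝ) * Real.Gamma ((k:ℝ) + (ν+1) + 1))) := by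
    intro k
    have hfact : ((k+1 : ℕ).factorial : ℝ) = ((k:ℝ)+1) * (k.factorial : ℝ) := by
      rw [Nat.factorial_succ]; push_cast; ring
    have harg : ((k+1:ℕ):ℝ) + ν + 1 = (k:ℝ) + (ν+1) + 1 := by push_cast; ring
    have hpow : a ^ (2*(k+1)) = a^2 * a^(2*k) := by rw [← pow_add]; congr 1; omega
    rw [hfact, harg, hpow]
    have hkf : (0:ℝ) < (k.factorial : ℝ) := by positivity
    have hk1 : (0:ℝ) < (k:ℝ) + 1 := by positivity
    push_cast
    by_cases hΓ : Real.Gamma ((k:ℝ) + (ν+1) + 1) = 0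
    · rw [hΓ]; simp
    · field_simp
  have hsumd : Summable (fun k : ℕ =>
      a ^ (2*k) * ((k : ℕ) : ℝ) / ((k.factorial : ℝ) * Real.Gamma ((k:ℝ) + ν + 1))) := by
    rw [← summable_nat_add_iff 1]
    refine Summable.congr (((besselG_summable ha (ν := ν + 1) (by linarith))).mul_left (a^2))
      fun k => ?_
    exact (hd_succ k).symm
  have hsumν : Summable (fun k : ℕ =>
      ν * (a ^ (2*k) / ((k.factorial : ℝ) * Real.Gamma ((k:ℝ) + ν + 1)))) :=
    (besselG_summable ha (by linarith)).mul_left ν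
  have key : ∀ k : ℕ,
      a ^ (2*k) / ((k.factorial : ℝ) * Real.Gamma ((k:ℝ) + (ν-1) + 1))
      = ν * (a ^ (2*k) / ((k.factorial : ℝ) * Real.Gamma ((k:ℝ) + ν + 1)))
        + a ^ (2*k) * ((k : ℕ) : ℝ) / ((k.factorial : ℝ) * Real.Gamma ((k:ℝ) + ν + 1)) := by
    intro k
    have harg : (k:ℝ) + (ν-1) + 1 = (k:ℝ) + ν := by ring
    rw [harg]
    by_cases h0 : (k:ℝ) + ν = 0
    · have hk0 : (k:ℝ) = 0 := by
        have : (0:ℝ) ≤ (k:ℝ) := Nat.cast_nonneg k; linarith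
      have hν0 : ν = 0 := by linarith [hk0 ▸ h0]
      rw [h0, Real.Gamma_zero, hν0, hk0]
      simp
    · have hpos : (0:ℝ) < (k:ℝ) + ν := by
        have h1 : (0:ℝ) ≤ (k:ℝ) := Nat.cast_nonneg k
        rcases lt_or_eq_of_le (by linarith : (0:ℝ) ≤ (k:ℝ) + ν) with h | h
        · exact h
        · exact absurd h.symm h0
      have hrec : Real.Gamma ((k:ℝ) + ν + 1) = ((k:ℝ) + ν) * Real.Gamma ((k:ℝ) + ν) := by
        rw [Real.Gamma_add_one h0]
      have hΓpos : 0 < Real.Gamma ((k:ℝ) + ν) := Real.Gamma_pos_of_pos hpos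
      have hkf : (0:ℝ) < (k.factorial : ℝ) := by positivity
      rw [hrec]
      field_simp
      ring
  unfold besselG
  rw [tsum_congr key, Summable.tsum_add hsumν hsumd, tsum_mul_left]
  have : ∑' k : ℕ, a ^ (2*k) * ((k : ℕ) : ℝ) / ((k.factorial : ℝ) * Real.Gamma ((k:ℝ) + ν + 1))
      = a^2 * ∑' k : ℕ, a ^ (2*k) / ((k.factorial : ℝ) * Real.Gamma ((k:ℝ) + (ν+1) + 1)) := by
    rw [Summable.tsum_eq_zero_add hsumd]
    simp only [Nat.cast_zero, mul_zero, zero_div, zero_add, Nat.cast_ofNat]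
    rw [← tsum_mul_left]
    refine tsum_congr fun k => ?_
    exact hd_succ k
  rw [this]
  ring

lemma cast_pos_add (ν : ℝ) (hν : 0 < ν) (n : ℕ) : 0 < (n:ℝ) + ν := by
  have : (0:ℝ) ≤ n := Nat.cast_nonneg n; linarith

lemma turan_pos {a ν : ℝ} (ha : 0 < a) (hν : 0 < ν) :
    besselG a (ν-1) * besselG a (ν+1) < besselG a ν ^ 2 := by
  have h1 := besselG_mul ha (μ := ν-1) (ν := ν+1) (by linarith) (by linarith) (by linarith)
  have h2 := besselG_mul ha (μ := ν) (ν := ν) (by linarith) (by linarith) (by linarith)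
  rw [sq, h1, h2]
  have hfact : ∀ n : ℕ, (0:ℝ) < (n.factorial : ℝ) := fun n => by positivity
  have ht : ∀ n : ℕ, (0:ℝ) < (n:ℝ) + ν := cast_pos_add ν hν
  have hApos : ∀ n : ℕ,
      0 < a ^ (2*n) * (Real.Gamma (2 * n + ν + ν + 1) /
          ((n.factorial : ℝ) * Real.Gamma (n + ν + 1) * Real.Gamma (n + ν + 1) *
            Real.Gamma (n + ν + ν + 1))) := by
    intro n
    have h6 := ht n
    have hΓ1 : (0:ℝ) < Real.Gamma ((n:ℝ)+ν+1) := Real.Gamma_pos_of_pos (by linarith)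
    have hΓu : (0:ℝ) < Real.Gamma ((n:ℝ)+ν+ν+1) := Real.Gamma_pos_of_pos (by linarith)
    have hN : (0:ℝ) < Real.Gamma (2*(n:ℝ) + ν + ν + 1) := Real.Gamma_pos_of_pos (by
      have : (0:ℝ) ≤ n := Nat.cast_nonneg n; linarith)
    have := hfact n
    positivity
  have hkey : ∀ n : ℕ,
      a ^ (2*n) * (Real.Gamma (2 * n + (ν-1) + (ν+1) + 1) /
          ((n.factorial : ℝ) * Real.Gamma (n + (ν-1) + 1) * Real.Gamma (n + (ν+1) + 1) *
            Real.Gamma (n + (ν-1) + (ν+1) + 1)))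
      = (a ^ (2*n) * (Real.Gamma (2 * n + ν + ν + 1) /
          ((n.factorial : ℝ) * Real.Gamma (n + ν + 1) * Real.Gamma (n + ν + 1) *
            Real.Gamma (n + ν + ν + 1)))) * (((n:ℝ)+ν)/((n:ℝ)+ν+1)) := by
    intro n
    have e1 : 2 * (n:ℝ) + (ν-1) + (ν+1) + 1 = 2 * n + ν + ν + 1 := by ring
    have e2 : (n:ℝ) + (ν-1) + 1 = (n:ℝ) + ν := by ring
    have e3 : (n:ℝ) + (ν+1) + 1 = ((n:ℝ) + ν + 1) + 1 := by ring
    have e4 : (n:ℝ) + (ν-1) + (ν+1) + 1 = (n:ℝ) + ν + ν + 1 := by ring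
    rw [e1, e2, e3, e4]
    have r1 : Real.Gamma ((n:ℝ) + ν + 1) = ((n:ℝ)+ν) * Real.Gamma ((n:ℝ)+ν) := by
      rw [Real.Gamma_add_one (ne_of_gt (ht n))]
    have r2 : Real.Gamma (((n:ℝ) + ν + 1) + 1) = ((n:ℝ)+ν+1) * Real.Gamma ((n:ℝ)+ν+1) := by
      have h6 := ht n
      rw [Real.Gamma_add_one (by linarith : ((n:ℝ)+ν+1) ≠ 0)]
    rw [r2, r1]
    have hΓt : (0:ℝ) < Real.Gamma ((n:ℝ)+ν) := Real.Gamma_pos_of_pos (ht n)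
    have hΓu : (0:ℝ) < Real.Gamma ((n:ℝ)+ν+ν+1) := Real.Gamma_pos_of_pos (by
      have := ht n; linarith)
    have h5 := hfact n
    have h6 := ht n
    field_simp
  apply Summable.tsum_lt_tsum_of_nonneg (i := 0)
  · intro n
    rw [hkey n]
    have h6 := ht n
    exact mul_nonneg (le_of_lt (hApos n)) (by positivity)
  · intro n
    rw [hkey n]
    have h6 := ht n
    have hfrac : ((n:ℝ)+ν)/((n:ℝ)+ν+1) ≤ 1 := by
      rw [div_le_one (by linarith)]; linarith
    calc _ ≤ (a ^ (2*n) * (Real.Gamma (2 * n + ν + ν + 1) /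
          ((n.factorial : ℝ) * Real.Gamma (n + ν + 1) * Real.Gamma (n + ν + 1) *
            Real.Gamma (n + ν + ν + 1)))) * 1 :=
        mul_le_mul_of_nonneg_left hfrac (le_of_lt (hApos n))
      _ = _ := mul_one _
  · rw [hkey 0]
    have h6 := ht 0
    have hfrac : (((0:ℕ):ℝ)+ν)/(((0:ℕ):ℝ)+ν+1) < 1 := by
      rw [div_lt_one (by linarith)]; linarith
    calc _ < (a ^ (2*0) * (Real.Gamma (2 * (0:ℕ) + ν + ν + 1) /
          (((0:ℕ).factorial : ℝ) * Real.Gamma ((0:ℕ) + ν + 1) * Real.Gamma ((0:ℕ) + ν + 1) *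
            Real.Gamma ((0:ℕ) + ν + ν + 1)))) * 1 :=
        mul_lt_mul_of_pos_left hfrac (hApos 0)
      _ = _ := mul_one _
  · exact besselG_mul_summable ha (by linarith) (by linarith) (by linarith)

lemma turan_zero {a : ℝ} (ha : 0 < a) :
    a^2 * (besselG a 1 * besselG a 1) < besselG a 0 ^ 2 := by
  have h1 := besselG_mul ha (μ := 1) (ν := 1) (by norm_num) (by norm_num) (by norm_num)
  have h2 := besselG_mul ha (μ := 0) (ν := 0) (by norm_num) (by norm_num) (by norm_num)
  rw [pow_two (besselG a 0), h2, h1, ← tsum_mul_left]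
  have hsum11 : Summable (fun n : ℕ => a^2 * (a ^ (2*n) * (Real.Gamma (2 * n + 1 + 1 + 1) /
          ((n.factorial : ℝ) * Real.Gamma (n + 1 + 1) * Real.Gamma (n + 1 + 1) *
            Real.Gamma (n + 1 + 1 + 1))))) :=
    (besselG_mul_summable ha (by norm_num) (by norm_num) (by norm_num)).mul_left _
  have hsum00 := besselG_mul_summable ha (μ := 0) (ν := 0) (by norm_num) (by norm_num) (by norm_num)
  set T : ℕ → ℝ := fun n => a ^ (2*n) * (Real.Gamma (2 * n + 0 + 0 + 1) /
          ((n.factorial : ℝ) * Real.Gamma (n + 0 + 1) * Real.Gamma (n + 0 + 1) *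
            Real.Gamma (n + 0 + 0 + 1))) with hT
  have hTpos : ∀ n, 0 < T n := by
    intro n
    have h0 : (0:ℝ) < (n:ℝ) + 1 := by positivity
    have hΓ1 : (0:ℝ) < Real.Gamma ((n:ℝ) + 0 + 1) := Real.Gamma_pos_of_pos (by linarith)
    have hΓ2 : (0:ℝ) < Real.Gamma ((n:ℝ) + 0 + 0 + 1) := Real.Gamma_pos_of_pos (by linarith)
    have hΓ3 : (0:ℝ) < Real.Gamma (2*(n:ℝ) + 0 + 0 + 1) := Real.Gamma_pos_of_pos (by
      have : (0:ℝ) ≤ n := Nat.cast_nonneg n; linarith)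
    have : (0:ℝ) < (n.factorial : ℝ) := by positivity
    simp only [hT]
    positivity
  have hkey : ∀ n : ℕ, a^2 * (a ^ (2*n) * (Real.Gamma (2 * n + 1 + 1 + 1) /
          ((n.factorial : ℝ) * Real.Gamma (n + 1 + 1) * Real.Gamma (n + 1 + 1) *
            Real.Gamma (n + 1 + 1 + 1))))
      = T (n+1) * (((n:ℝ)+1)/((n:ℝ)+2)) := by
    intro n
    simp only [hT]
    have hc : ((n+1 : ℕ) : ℝ) = (n:ℝ) + 1 := by push_cast; ring
    have e0 : 2 * ((n+1:ℕ):ℝ) + 0 + 0 + 1 = (2*(n:ℝ) + 1 + 1) + 1 := by rw [hc]; ring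
    have e1 : ((n+1:ℕ):ℝ) + 0 + 1 = (n:ℝ) + 1 + 1 := by rw [hc]; ring
    have e2 : ((n+1:ℕ):ℝ) + 0 + 0 + 1 = (n:ℝ) + 1 + 1 := by rw [hc]; ring
    rw [e0, e1, e2]
    have r0 : Real.Gamma ((2*(n:ℝ) + 1 + 1) + 1) = (2*(n:ℝ)+1+1) * Real.Gamma (2*(n:ℝ)+1+1) := by
      have : (0:ℝ) ≤ n := Nat.cast_nonneg n
      rw [Real.Gamma_add_one (by linarith : (2*(n:ℝ)+1+1) ≠ 0)]
    have e3 : 2 * (n:ℝ) + 1 + 1 + 1 = (2*(n:ℝ)+1+1) + 1 := by ring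
    rw [e3, r0]
    have e4 : (n:ℝ) + 1 + 1 + 1 = ((n:ℝ)+1+1) + 1 := by ring
    have r1 : Real.Gamma (((n:ℝ)+1+1) + 1) = ((n:ℝ)+1+1) * Real.Gamma ((n:ℝ)+1+1) := by
      have : (0:ℝ) ≤ n := Nat.cast_nonneg n
      rw [Real.Gamma_add_one (by linarith : ((n:ℝ)+1+1) ≠ 0)]
    rw [e4, r1]
    have hfac : ((n+1:ℕ).factorial : ℝ) = ((n:ℝ)+1) * (n.factorial : ℝ) := by
      rw [Nat.factorial_succ]; push_cast; ring
    rw [hfac]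
    have hpow : a ^ (2*(n+1)) = a^2 * a^(2*n) := by rw [← pow_add]; congr 1; omega
    rw [hpow]
    have h5 : (0:ℝ) < (n.factorial : ℝ) := by positivity
    have h6 : (0:ℝ) < (n:ℝ) + 1 := by positivity
    have hΓ1 : (0:ℝ) < Real.Gamma ((n:ℝ) + 1 + 1) := Real.Gamma_pos_of_pos (by linarith)
    have hΓ3 : (0:ℝ) < Real.Gamma (2*(n:ℝ) + 1 + 1) := Real.Gamma_pos_of_pos (by
      have : (0:ℝ) ≤ n := Nat.cast_nonneg n; linarith)
    field_simp
    ring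
  calc (∑' n : ℕ, a^2 * (a ^ (2*n) * (Real.Gamma (2 * n + 1 + 1 + 1) /
          ((n.factorial : ℝ) * Real.Gamma (n + 1 + 1) * Real.Gamma (n + 1 + 1) *
            Real.Gamma (n + 1 + 1 + 1)))))
      ≤ ∑' n : ℕ, T (n+1) := by
        apply Summable.tsum_le_tsum _ hsum11 ((summable_nat_add_iff 1).2 hsum00)
        intro n
        rw [hkey n]
        have hfrac : ((n:ℝ)+1)/((n:ℝ)+2) ≤ 1 := by
          rw [div_le_one (by positivity)]; linarith
        calc T (n+1) * (((n:ℝ)+1)/((n:ℝ)+2)) ≤ T (n+1) * 1 :=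
              mul_le_mul_of_nonneg_left hfrac (le_of_lt (hTpos (n+1)))
          _ = T (n+1) := mul_one _
    _ < T 0 + ∑' n : ℕ, T (n+1) := by
        have := hTpos 0
        linarith
    _ = ∑' n, T n := (Summable.tsum_eq_zero_add hsum00).symm

lemma turan {a ν : ℝ} (ha : 0 < a) (hν : 0 ≤ ν) :
    besselG a (ν-1) * besselG a (ν+1) < besselG a ν ^ 2 := by
  rcases eq_or_lt_of_le hν with h | h
  · subst h
    rw [besselG_rec ha le_rfl]
    simp only [zero_mul, add_zero, zero_add, mul_zero]
    have := turan_zero ha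
    calc a^2 * besselG a 1 * besselG a 1 = a^2 * (besselG a 1 * besselG a 1) := by ring
      _ < besselG a 0 ^ 2 := this
  · exact turan_pos ha h

lemma turanB {a ν : ℝ} (ha : 0 < a) (hν : 1/2 ≤ ν) :
    2*a^2*(besselG a ν^2 - besselG a (ν-1) * besselG a (ν+1))
      < besselG a (ν-1) * besselG a ν := by
  have hν0 : (0:ℝ) < ν := by linarith
  have hP := besselG_mul ha (μ := ν) (ν := ν) (by linarith) (by linarith) (by linarith)
  have hQ := besselG_mul ha (μ := ν-1) (ν := ν+1) (by linarith) (by linarith) (by linarith)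
  have hR := besselG_mul ha (μ := ν-1) (ν := ν) (by linarith) (by linarith) (by linarith)
  have sP := besselG_mul_summable ha (μ := ν) (ν := ν) (by linarith) (by linarith) (by linarith)
  have sQ := besselG_mul_summable ha (μ := ν-1) (ν := ν+1) (by linarith) (by linarith) (by linarith)
  have sR := besselG_mul_summable ha (μ := ν-1) (ν := ν) (by linarith) (by linarith) (by linarith)
  set P : ℕ → ℝ := fun n => a ^ (2*n) * (Real.Gamma (2 * n + ν + ν + 1) /
      ((n.factorial : ℝ) * Real.Gamma (n + ν + 1) * Real.Gamma (n + ν + 1) *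
        Real.Gamma (n + ν + ν + 1))) with hPdef
  set Q : ℕ → ℝ := fun n => a ^ (2*n) * (Real.Gamma (2 * n + (ν-1) + (ν+1) + 1) /
      ((n.factorial : ℝ) * Real.Gamma (n + (ν-1) + 1) * Real.Gamma (n + (ν+1) + 1) *
        Real.Gamma (n + (ν-1) + (ν+1) + 1))) with hQdef
  set R : ℕ → ℝ := fun n => a ^ (2*n) * (Real.Gamma (2 * n + (ν-1) + ν + 1) /
      ((n.factorial : ℝ) * Real.Gamma (n + (ν-1) + 1) * Real.Gamma (n + ν + 1) *
        Real.Gamma (n + (ν-1) + ν + 1))) with hRdef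
  have key : ∀ n : ℕ, 2*a^2*P n ≤ 2*a^2*Q n + R (n+1) := by
    intro n
    have hn0 : (0:ℝ) ≤ n := Nat.cast_nonneg n
    set t : ℝ := (n:ℝ) + ν with htdef
    have htpos : 0 < t := by simp only [htdef]; linarith
    set u : ℝ := (n:ℝ) + ν + ν with hudef
    have hupos : 0 < u := by simp only [hudef]; linarith
    have hΓt : 0 < Real.Gamma t := Real.Gamma_pos_of_pos htpos
    have hΓu : 0 < Real.Gamma u := Real.Gamma_pos_of_pos hupos
    have hΓN : 0 < Real.Gamma (2*(n:ℝ) + ν + ν + 1) := Real.Gamma_pos_of_pos (by linarith)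
    have hfac : (0:ℝ) < (n.factorial : ℝ) := by positivity
    -- rewrite all the Gamma values
    have rt1 : Real.Gamma ((n:ℝ) + ν + 1) = t * Real.Gamma t := by
      rw [show (n:ℝ) + ν + 1 = t + 1 from by simp only [htdef]]
      rw [Real.Gamma_add_one (ne_of_gt htpos)]
    have rt2 : Real.Gamma ((n:ℝ) + (ν+1) + 1) = (t+1) * (t * Real.Gamma t) := by
      rw [show (n:ℝ) + (ν+1) + 1 = (t + 1) + 1 from by simp only [htdef]; ring]
      rw [Real.Gamma_add_one (by linarith : t + 1 ≠ 0), Real.Gamma_add_one (ne_of_gt htpos)]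
    have rt3 : Real.Gamma ((n:ℝ) + (ν-1) + 1) = Real.Gamma t := by
      rw [show (n:ℝ) + (ν-1) + 1 = t from by simp only [htdef]; ring]
    have ru1 : Real.Gamma ((n:ℝ) + ν + ν + 1) = u * Real.Gamma u := by
      rw [show (n:ℝ) + ν + ν + 1 = u + 1 from by simp only [hudef]]
      rw [Real.Gamma_add_one (ne_of_gt hupos)]
    have ru2 : Real.Gamma ((n:ℝ) + (ν-1) + (ν+1) + 1) = u * Real.Gamma u := by
      rw [show (n:ℝ) + (ν-1) + (ν+1) + 1 = u + 1 from by simp only [hudef]; ring]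
      rw [Real.Gamma_add_one (ne_of_gt hupos)]
    have rN1 : Real.Gamma (2*(n:ℝ) + (ν-1) + (ν+1) + 1) = Real.Gamma (2*(n:ℝ) + ν + ν + 1) := by
      rw [show 2*(n:ℝ) + (ν-1) + (ν+1) + 1 = 2*(n:ℝ) + ν + ν + 1 from by ring]
    -- R (n+1) pieces
    have hc : ((n+1 : ℕ) : ℝ) = (n:ℝ) + 1 := by push_cast; ring
    have rR1 : Real.Gamma (2*((n+1:ℕ):ℝ) + (ν-1) + ν + 1)
        = (2*(n:ℝ)+ν+ν+1) * Real.Gamma (2*(n:ℝ) + ν + ν + 1) := by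
      rw [show 2*((n+1:ℕ):ℝ) + (ν-1) + ν + 1 = (2*(n:ℝ) + ν + ν + 1) + 1 from by
        rw [hc]; ring]
      rw [Real.Gamma_add_one (by linarith : 2*(n:ℝ) + ν + ν + 1 ≠ 0)]
    have rR2 : Real.Gamma (((n+1:ℕ):ℝ) + (ν-1) + 1) = t * Real.Gamma t := by
      rw [show ((n+1:ℕ):ℝ) + (ν-1) + 1 = t + 1 from by rw [hc]; simp only [htdef]; ring]
      rw [Real.Gamma_add_one (ne_of_gt htpos)]
    have rR3 : Real.Gamma (((n+1:ℕ):ℝ) + ν + 1) = (t+1) * (t * Real.Gamma t) := by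
      rw [show ((n+1:ℕ):ℝ) + ν + 1 = (t + 1) + 1 from by rw [hc]; simp only [htdef]; ring]
      rw [Real.Gamma_add_one (by linarith : t + 1 ≠ 0), Real.Gamma_add_one (ne_of_gt htpos)]
    have rR4 : Real.Gamma (((n+1:ℕ):ℝ) + (ν-1) + ν + 1) = u * Real.Gamma u := by
      rw [show ((n+1:ℕ):ℝ) + (ν-1) + ν + 1 = u + 1 from by rw [hc]; simp only [hudef]; ring]
      rw [Real.Gamma_add_one (ne_of_gt hupos)]
    have hfacr : ((n+1:ℕ).factorial : ℝ) = ((n:ℝ)+1) * (n.factorial : ℝ) := by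
      rw [Nat.factorial_succ]; push_cast; ring
    have hpowr : a ^ (2*(n+1)) = a^2 * a^(2*n) := by rw [← pow_add]; congr 1; omega
    simp only [hPdef, hQdef, hRdef]
    rw [rt1, rt2, rt3, ru1, ru2, rN1, rR1, rR2, rR3, rR4, hfacr, hpowr]
    -- now a pure algebraic inequality
    have hsub : 2*a^2*(a ^ (2*n) * (Real.Gamma (2*(n:ℝ) + ν + ν + 1) /
          ((n.factorial : ℝ) * (Real.Gamma t) * ((t+1) * (t * Real.Gamma t)) * (u * Real.Gamma u))))
        + a^2 * a^(2*n) * ((2*(n:ℝ)+ν+ν+1) * Real.Gamma (2*(n:ℝ) + ν + ν + 1) /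
          ((((n:ℝ)+1) * (n.factorial : ℝ)) * (t * Real.Gamma t) * ((t+1) * (t * Real.Gamma t)) *
            (u * Real.Gamma u)))
        - 2*a^2*(a ^ (2*n) * (Real.Gamma (2*(n:ℝ) + ν + ν + 1) /
          ((n.factorial : ℝ) * (t * Real.Gamma t) * (t * Real.Gamma t) * (u * Real.Gamma u))))
        = (2*ν - 1) * (a^2 * a^(2*n) * Real.Gamma (2*(n:ℝ) + ν + ν + 1) /
            ((n.factorial : ℝ) * (Real.Gamma t)^2 * u * Real.Gamma u * ((n:ℝ)+1) * t^2 * (t+1))) := by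
      field_simp
      ring
    have hnonneg : 0 ≤ (2*ν - 1) * (a^2 * a^(2*n) * Real.Gamma (2*(n:ℝ) + ν + ν + 1) /
            ((n.factorial : ℝ) * (Real.Gamma t)^2 * u * Real.Gamma u * ((n:ℝ)+1) * t^2 * (t+1))) := by
      have h1 : 0 ≤ 2*ν - 1 := by linarith
      have h2 : 0 < a^2 * a^(2*n) * Real.Gamma (2*(n:ℝ) + ν + ν + 1) /
            ((n.factorial : ℝ) * (Real.Gamma t)^2 * u * Real.Gamma u * ((n:ℝ)+1) * t^2 * (t+1)) := by
        positivity
      positivity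
    linarith [hsub, hnonneg]
  have hR0 : 0 < R 0 := by
    simp only [hRdef]
    have h1 : (0:ℝ) < Real.Gamma (2*((0:ℕ):ℝ) + (ν-1) + ν + 1) := Real.Gamma_pos_of_pos (by
      push_cast; linarith)
    have h2 : (0:ℝ) < Real.Gamma (((0:ℕ):ℝ) + (ν-1) + 1) := Real.Gamma_pos_of_pos (by
      push_cast; linarith)
    have h3 : (0:ℝ) < Real.Gamma (((0:ℕ):ℝ) + ν + 1) := Real.Gamma_pos_of_pos (by
      push_cast; linarith)
    have h4 : (0:ℝ) < Real.Gamma (((0:ℕ):ℝ) + (ν-1) + ν + 1) := Real.Gamma_pos_of_pos (by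
      push_cast; linarith)
    have h5 : (0:ℝ) < ((0:ℕ).factorial : ℝ) := by positivity
    positivity
  have step1 : 2*a^2*(∑' n, P n) ≤ ∑' n, (2*a^2*Q n + R (n+1)) := by
    rw [← tsum_mul_left]
    exact Summable.tsum_le_tsum key (sP.mul_left _) ((sQ.mul_left _).add ((summable_nat_add_iff 1).2 sR))
  have step2 : ∑' n, (2*a^2*Q n + R (n+1)) = 2*a^2*(∑' n, Q n) + ((∑' n, R n) - R 0) := by
    rw [Summable.tsum_add (sQ.mul_left _) ((summable_nat_add_iff 1).2 sR), tsum_mul_left]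
    have := Summable.tsum_eq_zero_add sR
    rw [this]
    ring
  have hsq : besselG a ν ^ 2 = tsum P := by rw [pow_two]; exact hP
  rw [hsq, hQ, hR]
  linarith [step1, step2, hR0]

lemma ratio_mul_x {x : ℝ} (hx : 0 < x) {ν : ℝ} (hν : 0 ≤ ν) :
    x * (besselI (ν-1) x / besselI ν x)
      = 2 * besselG (x/2) (ν-1) / besselG (x/2) ν := by
  have ha : 0 < x/2 := by linarith
  have hg0 : 0 < besselG (x/2) ν := besselG_pos ha (by linarith)
  rw [besselI_eq hx, besselI_eq hx]
  have hpow : (x/2)^(ν-1) = (x/2)^ν / (x/2) := by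
    rw [Real.rpow_sub ha, Real.rpow_one]
  rw [hpow]
  have hxν : (0:ℝ) < (x/2)^ν := Real.rpow_pos_of_pos ha ν
  field_simp

lemma quad_lt {u c x : ℝ} (hx : 0 < x) (hc : 0 ≤ c) (hq : u^2 - 2*c*u - x^2 < 0) :
    u < c + Real.sqrt (c^2 + x^2) := by
  have hs0 : 0 ≤ Real.sqrt (c^2+x^2) := Real.sqrt_nonneg _
  have hs2 : Real.sqrt (c^2+x^2)^2 = c^2 + x^2 := Real.sq_sqrt (by positivity)
  by_contra hcon
  push_neg at hcon
  nlinarith [mul_nonneg (by nlinarith : (0:ℝ) ≤ u - c - Real.sqrt (c^2+x^2))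
    (by nlinarith : (0:ℝ) ≤ u - c + Real.sqrt (c^2+x^2))]

lemma quad_gt {u c x : ℝ} (hx : 0 < x) (hu : 0 < u) (hq : 0 < u^2 - 2*c*u - x^2) :
    c + Real.sqrt (c^2 + x^2) < u := by
  have hs0 : 0 ≤ Real.sqrt (c^2+x^2) := Real.sqrt_nonneg _
  have hs2 : Real.sqrt (c^2+x^2)^2 = c^2 + x^2 := Real.sq_sqrt (by positivity)
  have hsc : c < Real.sqrt (c^2+x^2) := by
    calc c ≤ |c| := le_abs_self c
      _ = Real.sqrt (c^2) := (Real.sqrt_sq_eq_abs c).symm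
      _ < Real.sqrt (c^2 + x^2) := Real.sqrt_lt_sqrt (by positivity) (by nlinarith)
  by_contra hcon
  push_neg at hcon
  nlinarith [mul_nonpos_of_nonpos_of_nonneg
    (by nlinarith : u - c - Real.sqrt (c^2+x^2) ≤ 0)
    (by nlinarith : (0:ℝ) ≤ u - c + Real.sqrt (c^2+x^2))]

lemma bound1 {x : ℝ} (hx : 0 < x) {ν : ℝ} (hν : 0 ≤ ν) :
    besselI (ν-1) x / besselI ν x < (ν + Real.sqrt (ν^2 + x^2)) / x := by
  have ha : 0 < x/2 := by linarith
  set a := x/2 with hadef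
  have hx2 : x = 2*a := by rw [hadef]; ring
  have hg0 : 0 < besselG a ν := besselG_pos ha (by linarith)
  have hgp : 0 < besselG a (ν+1) := besselG_pos ha (by linarith)
  have hrec := besselG_rec ha hν
  have hgm : 0 < besselG a (ν-1) := by rw [hrec]; positivity
  have hT := turan ha hν
  have hu := ratio_mul_x hx hν
  rw [← hadef] at hu
  set gm := besselG a (ν-1)
  set g0 := besselG a ν
  set gp := besselG a (ν+1)
  clear_value gm g0 gp
  have hq : (2*gm/g0)^2 - 2*ν*(2*gm/g0) - x^2 < 0 := by
    have e : (2*gm/g0)^2 - 2*ν*(2*gm/g0) - x^2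
        = (4/g0^2) * (gm^2 - ν*gm*g0 - a^2*g0^2) := by
      rw [hx2]; field_simp; ring
    have e2 : gm^2 - ν*gm*g0 - a^2*g0^2 = a^2*(gm*gp - g0^2) := by
      rw [hrec]; ring
    rw [e, e2]
    have h1 : gm*gp - g0^2 < 0 := by nlinarith [hT]
    have h2 : (0:ℝ) < 4/g0^2 := by positivity
    exact mul_neg_of_pos_of_neg h2 (mul_neg_of_pos_of_neg (pow_pos ha 2) h1)
  have hlt : 2*gm/g0 < ν + Real.sqrt (ν^2+x^2) := quad_lt hx hν hq
  rw [lt_div_iff₀ hx, mul_comm, hu]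
  exact hlt

lemma bound2 {x : ℝ} (hx : 0 < x) {ν : ℝ} (hν : 1/2 ≤ ν) :
    (ν - 1/2 + Real.sqrt ((ν - 1/2)^2 + x^2)) / x < besselI (ν-1) x / besselI ν x := by
  have ha : 0 < x/2 := by linarith
  set a := x/2 with hadef
  have hx2 : x = 2*a := by rw [hadef]; ring
  have hν0 : (0:ℝ) ≤ ν := by linarith
  have hg0 : 0 < besselG a ν := besselG_pos ha (by linarith)
  have hgp : 0 < besselG a (ν+1) := besselG_pos ha (by linarith)
  have hrec := besselG_rec ha hν0
  have hgm : 0 < besselG a (ν-1) := by rw [hrec]; positivity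
  have hB := turanB ha hν
  have hu := ratio_mul_x hx hν0
  rw [← hadef] at hu
  set gm := besselG a (ν-1)
  set g0 := besselG a ν
  set gp := besselG a (ν+1)
  clear_value gm g0 gp
  have hq : 0 < (2*gm/g0)^2 - 2*(ν-1/2)*(2*gm/g0) - x^2 := by
    have e : (2*gm/g0)^2 - 2*(ν-1/2)*(2*gm/g0) - x^2
        = (2/g0^2) * (2*gm^2 - (2*ν-1)*gm*g0 - 2*a^2*g0^2) := by
      rw [hx2]; field_simp
    have e2 : 2*gm^2 - (2*ν-1)*gm*g0 - 2*a^2*g0^2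
        = gm*g0 - 2*a^2*(g0^2 - gm*gp) := by
      rw [hrec]; ring
    rw [e, e2]
    have h1 : 0 < gm*g0 - 2*a^2*(g0^2 - gm*gp) := by nlinarith [hB]
    have h2 : (0:ℝ) < 2/g0^2 := by positivity
    exact mul_pos h2 h1
  have hupos : 0 < 2*gm/g0 := by positivity
  have hlt : ν - 1/2 + Real.sqrt ((ν-1/2)^2+x^2) < 2*gm/g0 := quad_gt hx hupos hq
  rw [div_lt_iff₀ hx, mul_comm, hu]
  exact hlt

lemma bound3 {x : ℝ} (hx : 0 < x) {ν : ℝ} (hν : 0 ≤ ν) :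
    (ν - 1 + Real.sqrt ((ν - 1)^2 + x^2)) / x < besselI (ν-1) x / besselI ν x := by
  have ha : 0 < x/2 := by linarith
  set a := x/2 with hadef
  have hx2 : x = 2*a := by rw [hadef]; ring
  have hg0 : 0 < besselG a ν := besselG_pos ha (by linarith)
  have hgp : 0 < besselG a (ν+1) := besselG_pos ha (by linarith)
  have hgpp : 0 < besselG a (ν+2) := besselG_pos ha (by linarith)
  have hrec := besselG_rec ha hν
  have hgm : 0 < besselG a (ν-1) := by rw [hrec]; positivity
  -- upper bound at ν+1 : v = 2*g0/gp < (ν+1) + s'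
  have hν1 : (0:ℝ) ≤ ν + 1 := by linarith
  have hrec1 := besselG_rec ha hν1
  rw [show ν + 1 - 1 = ν from by ring] at hrec1
  have hT1 := turan ha hν1
  rw [show ν + 1 - 1 = ν from by ring] at hT1
  have hu := ratio_mul_x hx hν
  rw [← hadef] at hu
  set gm := besselG a (ν-1)
  set g0 := besselG a ν
  set gp := besselG a (ν+1)
  set gpp := besselG a (ν+1+1)
  clear_value gm g0 gp gpp
  have hq1 : (2*g0/gp)^2 - 2*(ν+1)*(2*g0/gp) - x^2 < 0 := by
    have e : (2*g0/gp)^2 - 2*(ν+1)*(2*g0/gp) - x^2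
        = (4/gp^2) * (g0^2 - (ν+1)*g0*gp - a^2*gp^2) := by
      rw [hx2]; field_simp; ring
    have e2 : g0^2 - (ν+1)*g0*gp - a^2*gp^2 = a^2*(g0*gpp - gp^2) := by
      rw [hrec1]; ring
    rw [e, e2]
    have h1 : g0*gpp - gp^2 < 0 := by nlinarith [hT1]
    have h2 : (0:ℝ) < 4/gp^2 := by positivity
    exact mul_neg_of_pos_of_neg h2 (mul_neg_of_pos_of_neg (pow_pos ha 2) h1)
  have hv : 2*g0/gp < (ν+1) + Real.sqrt ((ν+1)^2 + x^2) := quad_lt hx (by linarith) hq1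
  have hvpos : 0 < 2*g0/gp := by positivity
  set s' := Real.sqrt ((ν+1)^2 + x^2) with hs'def
  have hs'0 : 0 ≤ s' := Real.sqrt_nonneg _
  have hs'2 : s'^2 = (ν+1)^2 + x^2 := Real.sq_sqrt (by positivity)
  -- u = 2gm/g0 = 2ν + x²·(gp/(2g0)) ... precisely u = 2ν + x^2/(2*g0/gp)
  have hueq : 2*gm/g0 = 2*ν + x^2/(2*g0/gp) := by
    rw [hrec, hx2]
    field_simp
    ring
  have hden : 0 < (ν+1) + s' := by linarith
  have hxs : x^2/((ν+1) + s') = s' - (ν+1) := by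
    rw [div_eq_iff (ne_of_gt hden)]
    nlinarith [hs'2]
  have hstep : x^2/((ν+1) + s') < x^2/(2*g0/gp) := by
    apply div_lt_div_of_pos_left (by positivity) hvpos hv
  have hu_gt : ν - 1 + s' < 2*gm/g0 := by
    rw [hueq]
    rw [hxs] at hstep
    linarith
  have hs_le : Real.sqrt ((ν-1)^2 + x^2) ≤ s' := by
    apply Real.sqrt_le_sqrt
    nlinarith
  rw [div_lt_iff₀ hx, mul_comm, hu]
  calc ν - 1 + Real.sqrt ((ν-1)^2 + x^2) ≤ ν - 1 + s' := by linarith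
    _ < 2*gm/g0 := hu_gt


theorem besselI_ratio_nullcline_bounds (ν x : ℝ) (hx : 0 < x) :
    (0 ≤ ν →
      besselI (ν - 1) x / besselI ν x < (ν + Real.sqrt (ν ^ 2 + x ^ 2)) / x) ∧
    (1 / 2 ≤ ν →
      besselI (ν - 1) x / besselI ν x >
        (ν - 1 / 2 + Real.sqrt ((ν - 1 / 2) ^ 2 + x ^ 2)) / x) ∧
    (0 ≤ ν →
      besselI (ν - 1) x / besselI ν x >
        (ν - 1 + Real.sqrt ((ν - 1) ^ 2 + x ^ 2)) / x) :=
  ⟨fun h => bound1 hx h, fun h => bound2 hx h, fun h => bound3 hx h⟩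
end

section
/- Let λ_{μ,ν}(x) = (ν − (μ+1)/2 + √((ν − (μ+1)/2)² + x²))/x for x > 0. Then for all x > 0: (1) for every real ν, K_ν(x)/K_{ν−1}(x) < λ_{−1,ν}(x) = (ν + √(ν² + x²))/x; (2) if ν > 1/2 then K_ν(x)/K_{ν−1}(x) < λ_{0,ν}(x) = (ν − 1/2 + √((ν − 1/2)² + x²))/x; (3) for every real ν, K_ν(x)/K_{ν−1}(x) > λ_{1,ν}(x) = (ν − 1 + √((ν − 1)² + x²))/x. Moreover K_ν(x)/K_{ν−1}(x) = λ_{0,ν}(x) = 1 when ν = 1/2. -/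
/-!
Strict log-convexity of `ν ↦ K_ν(x)` (a Cauchy–Schwarz argument on the integral) gives
`K_ν² < K_{ν+1} K_{ν-1}` and `K_{ν-1}² < K_ν K_{ν-2}`. Combined with the recurrence
`K_{ν+1} - K_{ν-1} = (2ν/x) K_ν`, these say that `r = K_ν / K_{ν-1}` satisfies
`x r² - 2ν r - x < 0` and `x r² - 2(ν-1) r - x > 0`, which are the outer bounds.

The ratio solves the Riccati equation `r' = r² - (2ν-1) r / x - 1`, whose nullcline is
`λ_{0,ν}`. For `ν > 1/2` the nullcline is strictly decreasing, so a solution that is on or above it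
at `x` stays above it and is nondecreasing from then on. It would then stay above `λ_{0,ν}(x) > 1`,
contradicting the first bound, which forces `r(y) → 1` as `y → ∞`.
-/

/-- The modified Bessel function of the second kind,
`K_ν(x) = ∫_0^∞ e^{-x cosh t} cosh(ν t) dt`. -/
noncomputable def besselK (ν x : ℝ) : ℝ :=
  ∫ t in Set.Ioi (0 : ℝ), Real.exp (-x * Real.cosh t) * Real.cosh (ν * t)

open MeasureTheory Set Real Filter

lemma setIntegral_Ioi_pos {f : ℝ → ℝ} {a : ℝ} (hf : IntegrableOn f (Ioi a))
    (hpos : ∀ t ∈ Ioi a, 0 < f t) : 0 < ∫ t in Ioi a, f t := by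
  rw [setIntegral_pos_iff_support_of_nonneg_ae
    (ae_restrict_of_forall_mem measurableSet_Ioi fun t ht => (hpos t ht).le) hf]
  have hsupp : Function.support f ∩ Ioi a = Ioi a := inter_eq_right.2 fun t ht => (hpos t ht).ne'
  rw [hsupp, volume_Ioi]
  simp

lemma integrable_exp_mul_sub_mul_sq {a : ℝ} (ha : 0 < a) (b : ℝ) :
    Integrable fun t : ℝ => exp (b * t - a * t ^ 2) := by
  have hsq : (fun t : ℝ => exp (b * t - a * t ^ 2))
      = fun t => exp (b ^ 2 / (4 * a)) * exp (-a * (t - b / (2 * a)) ^ 2) := by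
    funext t
    rw [← exp_add]
    congr 1
    field_simp
    ring
  rw [hsq]
  exact ((integrable_exp_neg_mul_sq ha).comp_sub_right _).const_mul _

lemma one_add_sq_div_two_le_cosh (t : ℝ) : 1 + t ^ 2 / 2 ≤ cosh t := by
  have hs : |t| / 2 ≤ sinh (|t| / 2) := self_le_sinh_iff.2 (by positivity)
  have hcosh : cosh t = 1 + 2 * sinh (|t| / 2) ^ 2 := by
    have h2 := cosh_two_mul (|t| / 2)
    rw [mul_div_cancel₀ _ two_ne_zero, cosh_abs, cosh_sq] at h2
    linarith
  rw [hcosh, ← sq_abs t]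
  nlinarith [abs_nonneg t]

lemma cosh_le_exp_abs (y : ℝ) : cosh y ≤ exp |y| := by
  rw [← cosh_abs, cosh_eq]
  linarith [exp_le_exp.2 (show -|y| ≤ |y| by linarith [abs_nonneg y])]

noncomputable def besselKIntegrand (ν x t : ℝ) : ℝ := exp (-x * cosh t) * cosh (ν * t)

lemma continuous_besselKIntegrand (ν x : ℝ) : Continuous (besselKIntegrand ν x) := by
  unfold besselKIntegrand
  fun_prop

lemma besselKIntegrand_pos (ν x t : ℝ) : 0 < besselKIntegrand ν x t := by
  unfold besselKIntegrand
  positivity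

lemma antitone_besselKIntegrand (ν t : ℝ) : Antitone fun x => besselKIntegrand ν x t :=
  fun _ _ hxy =>
    mul_le_mul_of_nonneg_right (exp_le_exp.2 (by nlinarith [cosh_pos t])) (cosh_pos _).le

lemma besselKIntegrand_le_exp (ν : ℝ) {x t : ℝ} (hx : 0 ≤ x) (ht : 0 ≤ t) :
    besselKIntegrand ν x t ≤ exp (|ν| * t - x / 2 * t ^ 2) := by
  have hν : cosh (ν * t) ≤ exp (|ν| * t) := by
    simpa [abs_mul, abs_of_nonneg ht] using cosh_le_exp_abs (ν * t)
  calc besselKIntegrand ν x t ≤ exp (-x * cosh t) * exp (|ν| * t) :=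
        mul_le_mul_of_nonneg_left hν (exp_pos _).le
    _ ≤ exp (|ν| * t - x / 2 * t ^ 2) := by
        rw [← exp_add, exp_le_exp]
        nlinarith [one_add_sq_div_two_le_cosh t]

lemma integrableOn_besselKIntegrand (ν : ℝ) {x : ℝ} (hx : 0 < x) :
    IntegrableOn (besselKIntegrand ν x) (Ioi 0) :=
  (integrable_exp_mul_sub_mul_sq (half_pos hx) |ν|).integrableOn.mono'
    (continuous_besselKIntegrand ν x).aestronglyMeasurable
    (ae_restrict_of_forall_mem measurableSet_Ioi fun t ht => by
      rw [norm_of_nonneg (besselKIntegrand_pos ν x t).le]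
      exact besselKIntegrand_le_exp ν hx.le (le_of_lt ht))

lemma besselK_pos (ν : ℝ) {x : ℝ} (hx : 0 < x) : 0 < besselK ν x :=
  setIntegral_Ioi_pos (integrableOn_besselKIntegrand ν hx) fun t _ => besselKIntegrand_pos ν x t

lemma besselK_neg (ν x : ℝ) : besselK (-ν) x = besselK ν x := by
  simp only [besselK, neg_mul, cosh_neg]

lemma cosh_mul_besselKIntegrand (ν x t : ℝ) :
    cosh t * besselKIntegrand ν x t
      = (besselKIntegrand (ν + 1) x t + besselKIntegrand (ν - 1) x t) / 2 := by
  simp only [besselKIntegrand, add_mul, sub_mul, one_mul, cosh_add, cosh_sub]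
  ring

lemma hasDerivAt_exp_mul_sinh (ν x t : ℝ) :
    HasDerivAt (fun s => exp (-x * cosh s) * sinh (ν * s))
      (ν * besselKIntegrand ν x t
        - x / 2 * (besselKIntegrand (ν + 1) x t - besselKIntegrand (ν - 1) x t)) t := by
  have hexp := ((hasDerivAt_cosh t).const_mul (-x)).exp
  have hsinh := ((hasDerivAt_id t).const_mul ν).sinh
  refine (hexp.mul hsinh).congr_deriv ?_
  simp only [besselKIntegrand, add_mul, sub_mul, one_mul, cosh_add, cosh_sub, id]
  ring

lemma besselK_add_one (ν : ℝ) {x : ℝ} (hx : 0 < x) :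
    besselK (ν + 1) x = besselK (ν - 1) x + 2 * ν / x * besselK ν x := by
  have hI := fun μ => integrableOn_besselKIntegrand μ hx
  have hderiv := fun t (_ : t ∈ Ici (0 : ℝ)) => hasDerivAt_exp_mul_sinh ν x t
  have hdiff : IntegrableOn
      (fun t => besselKIntegrand (ν + 1) x t - besselKIntegrand (ν - 1) x t) (Ioi 0) :=
    (hI (ν + 1)).sub (hI (ν - 1))
  have hf'int : IntegrableOn (fun t => ν * besselKIntegrand ν x t
      - x / 2 * (besselKIntegrand (ν + 1) x t - besselKIntegrand (ν - 1) x t)) (Ioi 0) :=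
    ((hI ν).const_mul ν).sub (hdiff.const_mul (x / 2))
  have hfint : IntegrableOn (fun s => exp (-x * cosh s) * sinh (ν * s)) (Ioi 0) :=
    (hI ν).mono' (by fun_prop) (ae_of_all _ fun t => by
      rw [norm_mul, norm_of_nonneg (exp_pos _).le, norm_eq_abs, abs_sinh, besselKIntegrand,
        ← cosh_abs (ν * t)]
      exact mul_le_mul_of_nonneg_left (sinh_lt_cosh _).le (exp_pos _).le)
  have hlim := tendsto_zero_of_hasDerivAt_of_integrableOn_Ioi
    (fun t ht => hderiv t (Ioi_subset_Ici_self ht)) hf'int hfint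
  have hFTC := integral_Ioi_of_hasDerivAt_of_tendsto' hderiv hf'int hlim
  rw [integral_sub ((hI ν).const_mul ν) (hdiff.const_mul (x / 2)),
    integral_const_mul, integral_const_mul, integral_sub (hI (ν + 1)) (hI (ν - 1))] at hFTC
  change ν * besselK ν x - x / 2 * (besselK (ν + 1) x - besselK (ν - 1) x) = _ at hFTC
  simp only [mul_zero, sinh_zero, sub_zero] at hFTC
  field_simp
  linarith

lemma hasDerivAt_besselK (ν : ℝ) {x : ℝ} (hx : 0 < x) :
    HasDerivAt (besselK ν) (-(besselK (ν + 1) x + besselK (ν - 1) x) / 2) x := by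
  have hI := fun μ y (hy : 0 < y) => integrableOn_besselKIntegrand μ hy
  have hbound : IntegrableOn (fun t => cosh t * besselKIntegrand ν (x / 2) t) (Ioi 0) := by
    simp_rw [cosh_mul_besselKIntegrand]
    exact ((hI _ _ (half_pos hx)).add (hI _ _ (half_pos hx))).div_const 2
  have key := hasDerivAt_integral_of_dominated_loc_of_deriv_le
    (F := fun y t => besselKIntegrand ν y t) (F' := fun y t => -(cosh t * besselKIntegrand ν y t))
    (μ := volume.restrict (Ioi 0)) (Metric.ball_mem_nhds x (half_pos hx))
    (Eventually.of_forall fun y => (continuous_besselKIntegrand ν y).aestronglyMeasurable)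
    (hI ν x hx) (by unfold besselKIntegrand; fun_prop) ?_ hbound ?_
  · refine key.2.congr_deriv ?_
    simp_rw [integral_neg, cosh_mul_besselKIntegrand]
    rw [integral_div, integral_add (hI _ _ hx) (hI _ _ hx)]
    show -((besselK (ν + 1) x + besselK (ν - 1) x) / 2) = _
    ring
  · refine ae_of_all _ fun t y hy => ?_
    have hxy : x / 2 ≤ y := by
      rw [Metric.mem_ball, dist_eq, abs_lt] at hy
      linarith
    rw [norm_neg, norm_mul, norm_of_nonneg (cosh_pos t).le,
      norm_of_nonneg (besselKIntegrand_pos ν y t).le]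
    exact mul_le_mul_of_nonneg_left (antitone_besselKIntegrand ν t hxy) (cosh_pos t).le
  · refine ae_of_all _ fun t y _ => ?_
    have := (((hasDerivAt_id y).neg.mul_const (cosh t)).exp).mul_const (cosh (ν * t))
    refine this.congr_deriv ?_
    simp only [besselKIntegrand, Pi.neg_apply, id_eq]
    ring

lemma cosh_midpoint_mul_sq_lt {a b t : ℝ} (hab : a ≠ b) (ht : t ≠ 0) :
    cosh ((a + b) / 2 * t) ^ 2 < cosh (a * t) * cosh (b * t) := by
  have hgt : 1 < cosh ((a - b) * t) := one_lt_cosh.2 (mul_ne_zero (sub_ne_zero.2 hab) ht)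
  have hprod : cosh (a * t) * cosh (b * t) = (cosh ((a + b) * t) + cosh ((a - b) * t)) / 2 := by
    rw [add_mul, sub_mul, cosh_add, cosh_sub]
    ring
  have hsq := cosh_two_mul ((a + b) / 2 * t)
  rw [show 2 * ((a + b) / 2 * t) = (a + b) * t by ring] at hsq
  nlinarith [cosh_sq ((a + b) / 2 * t)]

theorem besselK_midpoint_sq_lt {a b x : ℝ} (hab : a ≠ b) (hx : 0 < x) :
    besselK ((a + b) / 2) x ^ 2 < besselK a x * besselK b x := by
  set m := (a + b) / 2
  set p := besselK m x
  set q := besselK a x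
  have hq : 0 < q := besselK_pos a hx
  have hI := fun μ => integrableOn_besselKIntegrand μ hx
  have hpos : ∀ t ∈ Ioi (0 : ℝ), 0 < p ^ 2 * besselKIntegrand a x t
      + q ^ 2 * besselKIntegrand b x t - 2 * p * q * besselKIntegrand m x t := by
    intro t ht
    have hC := cosh_midpoint_mul_sq_lt hab (ne_of_gt ht)
    have hA := cosh_pos (a * t)
    have hform : 2 * p * q * cosh (m * t) < p ^ 2 * cosh (a * t) + q ^ 2 * cosh (b * t) := by
      -- `cosh (a t)` times the gap is
      -- `(p cosh (a t) - q cosh (m t))² + q² (cosh (a t) cosh (b t) - cosh (m t)²)`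
      nlinarith [sq_nonneg (p * cosh (a * t) - q * cosh (m * t)),
        mul_pos (pow_pos hq 2) (sub_pos.2 hC)]
    simp only [besselKIntegrand]
    nlinarith [exp_pos (-x * cosh t)]
  have hint : IntegrableOn (fun t => p ^ 2 * besselKIntegrand a x t
      + q ^ 2 * besselKIntegrand b x t) (Ioi 0) :=
    ((hI a).const_mul _).add ((hI b).const_mul _)
  have hint' : IntegrableOn (fun t => p ^ 2 * besselKIntegrand a x t
      + q ^ 2 * besselKIntegrand b x t - 2 * p * q * besselKIntegrand m x t) (Ioi 0) :=
    hint.sub ((hI m).const_mul _)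
  have h := setIntegral_Ioi_pos hint' hpos
  rw [integral_sub hint ((hI m).const_mul _),
    integral_add ((hI a).const_mul _) ((hI b).const_mul _), integral_const_mul, integral_const_mul, integral_const_mul] at h
  change 0 < p ^ 2 * q + q ^ 2 * besselK b x - 2 * p * q * p at h
  nlinarith

noncomputable def besselKRatio (ν x : ℝ) : ℝ := besselK ν x / besselK (ν - 1) x

lemma besselKRatio_pos (ν : ℝ) {x : ℝ} (hx : 0 < x) : 0 < besselKRatio ν x :=
  div_pos (besselK_pos ν hx) (besselK_pos (ν - 1) hx)

lemma hasDerivAt_besselKRatio (ν : ℝ) {x : ℝ} (hx : 0 < x) :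
    HasDerivAt (besselKRatio ν)
      ((x * besselKRatio ν x ^ 2 - (2 * ν - 1) * besselKRatio ν x - x) / x) x := by
  have hD := hasDerivAt_besselK (ν - 1) hx
  have hKm := besselK_add_one (ν - 1) hx
  rw [sub_add_cancel] at hD hKm
  have hKm' : besselK (ν - 1 - 1) x = besselK ν x - 2 * (ν - 1) / x * besselK (ν - 1) x := by
    linarith
  have hD0 := (besselK_pos (ν - 1) hx).ne'
  refine ((hasDerivAt_besselK ν hx).div hD hD0).congr_deriv ?_
  rw [besselK_add_one ν hx, hKm', besselKRatio]
  field_simp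
  ring

/-- The positive root in `t` of `x t² - 2 c t - x`; the paper's `λ_{μ,ν}(x)` is
`nullcline (ν - (μ + 1) / 2) x`. -/
noncomputable def nullcline (c x : ℝ) : ℝ := (c + √(c ^ 2 + x ^ 2)) / x

section nullcline

variable {c x : ℝ}

lemma abs_lt_sqrt_sq_add_sq (c : ℝ) (hx : 0 < x) : |c| < √(c ^ 2 + x ^ 2) := by
  rw [← sqrt_sq_eq_abs]
  exact sqrt_lt_sqrt (sq_nonneg c) (by nlinarith)

lemma nullcline_pos (c : ℝ) (hx : 0 < x) : 0 < nullcline c x :=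
  div_pos (by linarith [neg_abs_le c, abs_lt_sqrt_sq_add_sq c hx]) hx

lemma mul_nullcline_sq_sub (c : ℝ) (hx : 0 < x) :
    x * nullcline c x ^ 2 - 2 * c * nullcline c x - x = 0 := by
  have hs := sq_sqrt (add_nonneg (sq_nonneg c) (sq_nonneg x))
  unfold nullcline
  field_simp
  linear_combination hs

lemma mul_sq_sub_eq_mul_sub_mul_sub (c x t : ℝ) : x * (x * t ^ 2 - 2 * c * t - x)
    = (x * t - (c + √(c ^ 2 + x ^ 2))) * (x * t - (c - √(c ^ 2 + x ^ 2))) := by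
  linear_combination sq_sqrt (add_nonneg (sq_nonneg c) (sq_nonneg x))

lemma sub_sqrt_lt_mul (c : ℝ) (hx : 0 < x) {t : ℝ} (ht : 0 ≤ t) :
    c - √(c ^ 2 + x ^ 2) < x * t := by
  nlinarith [le_abs_self c, abs_lt_sqrt_sq_add_sq c hx]

lemma nullcline_le_iff (hx : 0 < x) {t : ℝ} (ht : 0 ≤ t) :
    nullcline c x ≤ t ↔ 0 ≤ x * t ^ 2 - 2 * c * t - x := by
  rw [nullcline, div_le_iff₀ hx, ← mul_nonneg_iff_of_pos_left hx, mul_sq_sub_eq_mul_sub_mul_sub,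
    mul_nonneg_iff_of_pos_right (sub_pos.2 (sub_sqrt_lt_mul c hx ht)), sub_nonneg, mul_comm]

lemma nullcline_lt_iff (hx : 0 < x) {t : ℝ} (ht : 0 ≤ t) :
    nullcline c x < t ↔ 0 < x * t ^ 2 - 2 * c * t - x := by
  rw [nullcline, div_lt_iff₀ hx, ← mul_pos_iff_of_pos_left hx, mul_sq_sub_eq_mul_sub_mul_sub,
    mul_pos_iff_of_pos_right (sub_pos.2 (sub_sqrt_lt_mul c hx ht)), sub_pos, mul_comm]

lemma lt_nullcline_iff (hx : 0 < x) {t : ℝ} (ht : 0 ≤ t) :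
    t < nullcline c x ↔ x * t ^ 2 - 2 * c * t - x < 0 := by
  simpa only [not_le] using (nullcline_le_iff hx ht).not

lemma quadratic_div_eq (c x : ℝ) {N D : ℝ} (hD : 0 < D) :
    x * (N / D) ^ 2 - 2 * c * (N / D) - x = (x * N ^ 2 - 2 * c * N * D - x * D ^ 2) / D ^ 2 := by
  field_simp

lemma div_lt_nullcline_iff (hx : 0 < x) {N D : ℝ} (hN : 0 ≤ N) (hD : 0 < D) :
    N / D < nullcline c x ↔ x * N ^ 2 - 2 * c * N * D - x * D ^ 2 < 0 := by
  rw [lt_nullcline_iff hx (div_nonneg hN hD.le), quadratic_div_eq c x hD,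
    div_lt_iff₀ (by positivity), zero_mul]

lemma nullcline_lt_div_iff (hx : 0 < x) {N D : ℝ} (hN : 0 ≤ N) (hD : 0 < D) :
    nullcline c x < N / D ↔ 0 < x * N ^ 2 - 2 * c * N * D - x * D ^ 2 := by
  rw [nullcline_lt_iff hx (div_nonneg hN hD.le), quadratic_div_eq c x hD,
    lt_div_iff₀ (by positivity), zero_mul]

lemma hasDerivAt_nullcline (c : ℝ) (hx : 0 < x) :
    HasDerivAt (nullcline c) (-(c * nullcline c x) / (x * √(c ^ 2 + x ^ 2))) x := by
  have hsq := sq_sqrt (add_nonneg (sq_nonneg c) (sq_nonneg x))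
  have hroot : HasDerivAt (fun y => √(c ^ 2 + y ^ 2)) (2 * x / (2 * √(c ^ 2 + x ^ 2))) x := by
    simpa using ((hasDerivAt_pow 2 x).const_add (c ^ 2)).sqrt (by positivity)
  refine ((hroot.const_add c).div (hasDerivAt_id x) hx.ne').congr_deriv ?_
  simp only [nullcline, id]
  field_simp
  linear_combination (-1 : ℝ) * hsq

lemma one_lt_nullcline (hc : 0 < c) (hx : 0 < x) : 1 < nullcline c x := by
  have hxs : x < √(c ^ 2 + x ^ 2) := by
    simpa [abs_of_pos hx, add_comm] using abs_lt_sqrt_sq_add_sq x hc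
  rw [nullcline, one_lt_div hx]
  linarith

lemma nullcline_le_one_add (hc : 0 ≤ c) (hx : 0 < x) : nullcline c x ≤ 1 + 2 * c / x := by
  have hs : √(c ^ 2 + x ^ 2) ≤ c + x := sqrt_le_iff.2 ⟨by positivity, by nlinarith⟩
  rw [nullcline, div_le_iff₀ hx, add_mul, div_mul_cancel₀ _ hx.ne']
  linarith

end nullcline

theorem besselKRatio_lt_nullcline (ν : ℝ) {x : ℝ} (hx : 0 < x) :
    besselKRatio ν x < nullcline ν x := by
  have hturan := besselK_midpoint_sq_lt (a := ν + 1) (b := ν - 1) (by linarith) hx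
  rw [show (ν + 1 + (ν - 1)) / 2 = ν by ring, besselK_add_one ν hx] at hturan
  rw [besselKRatio, div_lt_nullcline_iff hx (besselK_pos ν hx).le (besselK_pos (ν - 1) hx)]
  field_simp at hturan
  nlinarith

theorem nullcline_sub_one_lt_besselKRatio (ν : ℝ) {x : ℝ} (hx : 0 < x) :
    nullcline (ν - 1) x < besselKRatio ν x := by
  have hturan := besselK_midpoint_sq_lt (a := ν) (b := ν - 1 - 1) (by linarith) hx
  have hrec := besselK_add_one (ν - 1) hx
  rw [show (ν + (ν - 1 - 1)) / 2 = ν - 1 by ring] at hturan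
  rw [sub_add_cancel] at hrec
  rw [besselKRatio, nullcline_lt_div_iff hx (besselK_pos ν hx).le (besselK_pos (ν - 1) hx)]
  field_simp at hrec
  nlinarith [besselK_pos ν hx]

/-- Once above the nullcline, `besselKRatio ν` stays there: the nullcline is strictly decreasing,
while the ratio is stationary wherever it meets it. -/
lemma nullcline_le_besselKRatio_of_le {ν x : ℝ} (hν : 1 / 2 < ν) (hx : 0 < x)
    (h : nullcline (ν - 1 / 2) x ≤ besselKRatio ν x) {y : ℝ} (hxy : x ≤ y) :
    nullcline (ν - 1 / 2) y ≤ besselKRatio ν y := by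
  have hpos : ∀ z ∈ Icc x y, 0 < z := fun z hz => hx.trans_le hz.1
  refine image_le_of_deriv_right_lt_deriv_boundary'
    (fun z hz => (hasDerivAt_nullcline _ (hpos z hz)).continuousAt.continuousWithinAt)
    (fun z hz => (hasDerivAt_nullcline _ (hpos z (Ico_subset_Icc_self hz))).hasDerivWithinAt) h
    (fun z hz => (hasDerivAt_besselKRatio ν (hpos z hz)).continuousAt.continuousWithinAt)
    (fun z hz => (hasDerivAt_besselKRatio ν (hpos z (Ico_subset_Icc_self hz))).hasDerivWithinAt)
    (fun z hz heq => ?_) ⟨hxy, le_rfl⟩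
  have hz := hpos z (Ico_subset_Icc_self hz)
  rw [← heq, show 2 * ν - 1 = 2 * (ν - 1 / 2) by ring, mul_nullcline_sq_sub _ hz, zero_div]
  have hc : 0 < ν - 1 / 2 := by linarith
  exact div_neg_of_neg_of_pos (neg_neg_of_pos (mul_pos hc (nullcline_pos _ hz)))
    (mul_pos hz (sqrt_pos.2 (by positivity)))

lemma monotoneOn_besselKRatio {ν x : ℝ} (hν : 1 / 2 < ν) (hx : 0 < x)
    (h : nullcline (ν - 1 / 2) x ≤ besselKRatio ν x) : MonotoneOn (besselKRatio ν) (Ici x) := by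
  refine monotoneOn_of_hasDerivWithinAt_nonneg (convex_Ici x)
    (fun z hz => (hasDerivAt_besselKRatio ν (hx.trans_le hz)).continuousAt.continuousWithinAt)
    (fun z hz => (hasDerivAt_besselKRatio ν (hx.trans_le (interior_subset hz))).hasDerivWithinAt)
    (fun z hz => ?_)
  rw [interior_Ici] at hz
  have hz0 : 0 < z := hx.trans hz
  have hle := nullcline_le_besselKRatio_of_le hν hx h hz.le
  rw [nullcline_le_iff hz0 (besselKRatio_pos ν hz0).le] at hle
  rw [show 2 * ν - 1 = 2 * (ν - 1 / 2) by ring]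
  exact div_nonneg hle hz0.le

theorem besselKRatio_lt_nullcline_sub_half {ν x : ℝ} (hν : 1 / 2 < ν) (hx : 0 < x) :
    besselKRatio ν x < nullcline (ν - 1 / 2) x := by
  by_contra! h
  have hdecay : Tendsto (fun y : ℝ => 2 * ν / y) atTop (nhds 0) :=
    tendsto_const_nhds.div_atTop tendsto_id
  have hlim : Tendsto (fun y : ℝ => 1 + 2 * ν / y) atTop (nhds 1) := by
    simpa using hdecay.const_add 1
  obtain ⟨y, hxy, hy⟩ := ((eventually_ge_atTop x).and
    (hlim.eventually (gt_mem_nhds (one_lt_nullcline (c := ν - 1 / 2) (by linarith) hx)))).exists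
  have hy0 : 0 < y := hx.trans_le hxy
  refine lt_irrefl (nullcline (ν - 1 / 2) x) ?_
  calc nullcline (ν - 1 / 2) x ≤ besselKRatio ν x := h
    _ ≤ besselKRatio ν y := monotoneOn_besselKRatio hν hx h self_mem_Ici hxy hxy
    _ < nullcline ν y := besselKRatio_lt_nullcline ν hy0
    _ ≤ 1 + 2 * ν / y := nullcline_le_one_add (by linarith) hy0
    _ < nullcline (ν - 1 / 2) x := hy

lemma nullcline_zero {x : ℝ} (hx : 0 < x) : nullcline 0 x = 1 := by
  rw [nullcline, zero_pow two_ne_zero, zero_add, zero_add, sqrt_sq hx.le, div_self hx.ne']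

theorem besselK_ratio_nullcline_bounds (ν x : ℝ) (hx : 0 < x) :
    (besselK ν x / besselK (ν - 1) x < (ν + Real.sqrt (ν ^ 2 + x ^ 2)) / x) ∧
    (1 / 2 < ν →
      besselK ν x / besselK (ν - 1) x <
        (ν - 1 / 2 + Real.sqrt ((ν - 1 / 2) ^ 2 + x ^ 2)) / x) ∧
    (besselK ν x / besselK (ν - 1) x >
      (ν - 1 + Real.sqrt ((ν - 1) ^ 2 + x ^ 2)) / x) ∧
    (ν = 1 / 2 →
      besselK ν x / besselK (ν - 1) x = 1 ∧
      (ν - 1 / 2 + Real.sqrt ((ν - 1 / 2) ^ 2 + x ^ 2)) / x = 1) := by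
  refine ⟨besselKRatio_lt_nullcline ν hx, fun hν => besselKRatio_lt_nullcline_sub_half hν hx,
    nullcline_sub_one_lt_besselKRatio ν hx, fun hν => ⟨?_, ?_⟩⟩
  · rw [show ν - 1 = -ν by rw [hν]; norm_num, besselK_neg, div_self (besselK_pos ν hx).ne']
  · rw [hν, sub_self]
    exact nullcline_zero hx
end

section
/- For every ν ≥ 1/2 and every x > 0, I_{ν−1}(x)/I_ν(x) > (ν − 1/2 + √(ν² − 1/4 + x²))/x. -/
/-!
Write `t = x / 2`, `y = t ^ 2` and `b_μ(k) = 1 / (k! Γ(k + μ + 1))`, so that `I_μ(x) = t ^ μ S_μ(y)`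
with `S_μ(y) = ∑ b_μ(k) y ^ k`. Since `b_{ν-1}(k) = (k + ν) b_ν(k)`, the claim reads
`√(ν² - 1/4 + 4y) S < U` for `S = S_ν(y)` and
`U = 2 S_{ν-1}(y) - (ν - 1/2) S = ∑ (2k + ν + 1/2) b_ν(k) y ^ k`, a series with positive
coefficients, so it suffices to compare `(ν² - 1/4 + 4y) S²` and `U²` coefficientwise.
By Chu–Vandermonde the Cauchy square of `b_μ` has the closed form
`∑_{i+j=n} b_μ(i) b_μ(j) = Γ(2μ + 2n + 1) / (n! Γ(μ + n + 1)² Γ(2μ + n + 1))`. With it, the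
coefficient of `y ^ (n+1)` in `U² - (ν² - 1/4) S²` exceeds four times the coefficient of `y ^ n`
in `S²` by `(2ν + 1)(ν - 1/2) / (2ν + 2n + 1)` times the coefficient of `y ^ (n+1)` in `S²`, and
the constant coefficient of `U² - (ν² - 1/4) S²` is `(ν + 1/2) b_ν(0)² > 0`.
-/

open Finset Polynomial

theorem Real.Gamma_add_nat_eq_descPochhammer_mul {t : ℝ} (ht : 0 < t) (k : ℕ) :
    Real.Gamma (t + k) = (descPochhammer ℝ k).eval (t + k - 1) * Real.Gamma t := by
  induction k with
  | zero => simp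
  | succ k ih =>
    rw [descPochhammer_succ_left, eval_mul, eval_comp, Nat.cast_succ, ← add_assoc,
      Real.Gamma_add_one (by positivity), ih]
    simp only [eval_X, eval_sub, eval_one]
    ring_nf

theorem Polynomial.descPochhammer_eval_add (n : ℕ) (r s : ℝ) :
    (descPochhammer ℝ n).eval (r + s) = ∑ p ∈ antidiagonal n,
      (n.choose p.1 : ℝ) *
        ((descPochhammer ℝ p.1).eval r * (descPochhammer ℝ p.2).eval s) := by
  have h (m : ℕ) (z : ℝ) : (descPochhammer ℝ m).eval z = (descPochhammer ℤ m).smeval z := by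
    rw [← descPochhammer_map (algebraMap ℤ ℝ), eval_map_algebraMap, aeval_eq_smeval]
  simp only [h]
  exact Ring.descPochhammer_smeval_add n (Commute.all r s)

theorem tsum_lt_tsum_of_le_succ {a b : ℕ → ℝ} (ha : Summable a) (hb : Summable b)
    (h0 : 0 < a 0) (h : ∀ n, b n ≤ a (n + 1)) : ∑' n, b n < ∑' n, a n := by
  have := hb.tsum_le_tsum h ((summable_nat_add_iff 1).mpr ha)
  rw [ha.tsum_eq_zero_add]
  linarith

def cauchySq (a : ℕ → ℝ) (n : ℕ) : ℝ := ∑ p ∈ antidiagonal n, a p.1 * a p.2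

section cauchySq

variable {a : ℕ → ℝ}

theorem hasSum_cauchySq (ha : Summable a) (h0 : 0 ≤ a) :
    HasSum (cauchySq a) ((∑' n, a n) ^ 2) := by
  have hprod := ha.mul_of_nonneg ha h0 h0
  rw [sq, ha.tsum_mul_tsum_eq_tsum_sum_antidiagonal ha hprod]
  exact (summable_sum_mul_antidiagonal_of_summable_mul hprod).hasSum

theorem cauchySq_mul_pow (a : ℕ → ℝ) (y : ℝ) (n : ℕ) :
    cauchySq (fun k => a k * y ^ k) n = cauchySq a n * y ^ n := by
  rw [cauchySq, cauchySq, sum_mul]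
  refine sum_congr rfl fun p hp => ?_
  rw [← mem_antidiagonal.mp hp, pow_add]
  ring

theorem hasSum_cauchySq_mul_pow {y : ℝ} (ha : Summable fun k => a k * y ^ k)
    (h0 : 0 ≤ fun k => a k * y ^ k) :
    HasSum (fun n => cauchySq a n * y ^ n) ((∑' k, a k * y ^ k) ^ 2) :=
  (hasSum_cauchySq ha h0).congr_fun fun n => (cauchySq_mul_pow a y n).symm

end cauchySq

noncomputable def besselCoeff (μ : ℝ) (k : ℕ) : ℝ :=
  ((k.factorial : ℝ) * Real.Gamma (k + μ + 1))⁻¹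

theorem besselI_eq_rpow_mul_tsum (μ : ℝ) {x : ℝ} (hx : 0 < x) :
    besselI μ x = (x / 2) ^ μ * ∑' k, besselCoeff μ k * ((x / 2) ^ 2) ^ k := by
  rw [besselI, ← tsum_mul_left]
  refine tsum_congr fun k => ?_
  rw [Real.rpow_add (by positivity), show 2 * (k : ℝ) = ((2 * k : ℕ) : ℝ) by push_cast; ring,
    Real.rpow_natCast, pow_mul, besselCoeff, div_eq_mul_inv]
  ring

section besselCoeff

variable {μ : ℝ}

theorem besselCoeff_pos (hμ : -1 < μ) (k : ℕ) : 0 < besselCoeff μ k := by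
  have hk : (0 : ℝ) < k + μ + 1 := by linarith [k.cast_nonneg (α := ℝ)]
  exact inv_pos.2 (mul_pos (mod_cast k.factorial_pos) (Real.Gamma_pos_of_pos hk))

theorem besselCoeff_eq_mul_besselCoeff_add_one (hμ : -1 < μ) (k : ℕ) :
    besselCoeff μ k = (k + μ + 1) * besselCoeff (μ + 1) k := by
  have hk : (k : ℝ) + μ + 1 ≠ 0 := by linarith [k.cast_nonneg (α := ℝ)]
  rw [besselCoeff, besselCoeff, ← add_assoc, Real.Gamma_add_one hk]
  field_simp

theorem besselCoeff_sub_one (hμ : 0 < μ) (k : ℕ) :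
    besselCoeff (μ - 1) k = (k + μ) * besselCoeff μ k := by
  rw [besselCoeff_eq_mul_besselCoeff_add_one (by linarith), sub_add_cancel]
  ring

theorem succ_mul_besselCoeff_succ (k : ℕ) :
    (k + 1) * besselCoeff μ (k + 1) = besselCoeff (μ + 1) k := by
  rw [besselCoeff, besselCoeff, Nat.factorial_succ, Nat.cast_mul, Nat.cast_succ,
    show (k : ℝ) + 1 + μ + 1 = k + (μ + 1) + 1 by ring]
  field_simp

theorem besselCoeff_eq_mul_besselCoeff_succ (hμ : -1 < μ) (k : ℕ) :
    besselCoeff μ k = (k + 1) * (k + μ + 1) * besselCoeff μ (k + 1) := by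
  rw [besselCoeff_eq_mul_besselCoeff_add_one hμ, ← succ_mul_besselCoeff_succ]
  ring

theorem summable_besselCoeff_mul_pow (hμ : -1 < μ) (y : ℝ) :
    Summable fun k => besselCoeff μ k * y ^ k := by
  refine summable_of_ratio_norm_eventually_le (r := 1 / 2) (by norm_num) ?_
  filter_upwards [tendsto_natCast_atTop_atTop.eventually_ge_atTop (2 * |y| + 1 - μ)] with k hk
  have hb := besselCoeff_pos hμ (k + 1)
  have hy : 2 * |y| ≤ (k + 1) * (k + μ + 1) := by nlinarith [abs_nonneg y]
  have hy' : 0 ≤ |y| ^ k * besselCoeff μ (k + 1) := by positivity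
  rw [besselCoeff_eq_mul_besselCoeff_succ hμ k, Real.norm_eq_abs, Real.norm_eq_abs, abs_mul,
    abs_mul, abs_mul, abs_pow, abs_pow, abs_of_pos hb,
    abs_of_nonneg (by linarith [abs_nonneg y] : (0 : ℝ) ≤ (k + 1) * (k + μ + 1)), pow_succ]
  nlinarith [mul_le_mul_of_nonneg_left hy hy']

theorem tsum_besselCoeff_mul_pow_pos (hμ : -1 < μ) {y : ℝ} (hy : 0 < y) :
    0 < ∑' k, besselCoeff μ k * y ^ k :=
  (summable_besselCoeff_mul_pow hμ y).tsum_pos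
    (fun k => (mul_pos (besselCoeff_pos hμ k) (pow_pos hy k)).le) 0
    (mul_pos (besselCoeff_pos hμ 0) (pow_pos hy 0))

theorem besselCoeff_mul_besselCoeff (hμ : -1 < μ) (i j : ℕ) :
    besselCoeff μ i * besselCoeff μ j = (i + j).choose i *
      ((descPochhammer ℝ i).eval (μ + i + j) * (descPochhammer ℝ j).eval (μ + i + j)) /
        ((i + j).factorial * Real.Gamma (μ + i + j + 1) ^ 2) := by
  have hi : (0 : ℝ) ≤ i := i.cast_nonneg
  have hj : (0 : ℝ) ≤ j := j.cast_nonneg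
  have hΓi : Real.Gamma (μ + i + j + 1) =
      (descPochhammer ℝ j).eval (μ + i + j) * Real.Gamma (i + μ + 1) := by
    have h := Real.Gamma_add_nat_eq_descPochhammer_mul (t := i + μ + 1) (by linarith) j
    rwa [show (i : ℝ) + μ + 1 + j = μ + i + j + 1 by ring, add_sub_cancel_right] at h
  have hΓj : Real.Gamma (μ + i + j + 1) =
      (descPochhammer ℝ i).eval (μ + i + j) * Real.Gamma (j + μ + 1) := by
    have h := Real.Gamma_add_nat_eq_descPochhammer_mul (t := j + μ + 1) (by linarith) i
    rwa [show (j : ℝ) + μ + 1 + i = μ + i + j + 1 by ring, add_sub_cancel_right] at h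
  have hfac : ((i + j).factorial : ℝ) = (i + j).choose i * i.factorial * j.factorial := by
    rw [Nat.choose_symm_add]
    exact_mod_cast (Nat.add_choose_mul_factorial_mul_factorial i j).symm
  have := Real.Gamma_pos_of_pos (by linarith : (0 : ℝ) < i + μ + 1)
  have := Real.Gamma_pos_of_pos (by linarith : (0 : ℝ) < j + μ + 1)
  have := descPochhammer_pos (S := ℝ) (n := i) (s := μ + i + j) (by linarith)
  have := descPochhammer_pos (S := ℝ) (n := j) (s := μ + i + j) (by linarith)
  have := i.factorial_pos
  have := j.factorial_pos
  have : 0 < (i + j).choose i := Nat.choose_pos (by omega)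
  rw [besselCoeff, besselCoeff, hfac, sq]
  nth_rw 1 [hΓi]
  rw [hΓj]
  field_simp

theorem cauchySq_besselCoeff (hμ : -1 / 2 < μ) (n : ℕ) :
    cauchySq (besselCoeff μ) n = Real.Gamma (2 * μ + 2 * n + 1) /
      (n.factorial * Real.Gamma (μ + n + 1) ^ 2 * Real.Gamma (2 * μ + n + 1)) := by
  have hn : (0 : ℝ) ≤ n := n.cast_nonneg
  have hΓ : Real.Gamma (2 * μ + 2 * n + 1) =
      (descPochhammer ℝ n).eval (2 * μ + 2 * n) * Real.Gamma (2 * μ + n + 1) := by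
    have h := Real.Gamma_add_nat_eq_descPochhammer_mul (t := 2 * μ + n + 1) (by linarith) n
    rwa [show 2 * μ + n + 1 + n = 2 * μ + 2 * n + 1 by ring, add_sub_cancel_right] at h
  have hterm : ∀ p ∈ antidiagonal n, besselCoeff μ p.1 * besselCoeff μ p.2 =
      n.choose p.1 *
          ((descPochhammer ℝ p.1).eval (μ + n) * (descPochhammer ℝ p.2).eval (μ + n)) /
        (n.factorial * Real.Gamma (μ + n + 1) ^ 2) := by
    rintro ⟨i, j⟩ hij
    obtain rfl : i + j = n := mem_antidiagonal.mp hij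
    rw [besselCoeff_mul_besselCoeff (by linarith), Nat.cast_add, ← add_assoc]
  have := Real.Gamma_pos_of_pos (by linarith : (0 : ℝ) < 2 * μ + n + 1)
  rw [cauchySq, sum_congr rfl hterm, ← sum_div, ← descPochhammer_eval_add,
    show μ + n + (μ + n) = 2 * μ + 2 * n by ring, hΓ, mul_div_mul_right _ _ this.ne']

theorem cauchySq_besselCoeff_succ (hμ : -1 / 2 < μ) (n : ℕ) :
    2 * (2 * μ + 2 * n + 1) * cauchySq (besselCoeff μ) n =
      (n + 1) * (μ + n + 1) * (2 * μ + n + 1) * cauchySq (besselCoeff μ) (n + 1) := by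
  have hn : (0 : ℝ) ≤ n := n.cast_nonneg
  have h1 : Real.Gamma (2 * μ + 2 * ↑(n + 1) + 1) =
      (2 * μ + 2 * n + 2) * ((2 * μ + 2 * n + 1) * Real.Gamma (2 * μ + 2 * n + 1)) := by
    rw [show 2 * μ + 2 * ↑(n + 1) + 1 = 2 * μ + 2 * n + 1 + 1 + 1 by push_cast; ring,
      Real.Gamma_add_one (by linarith), Real.Gamma_add_one (by linarith)]
    ring
  have h2 : Real.Gamma (μ + ↑(n + 1) + 1) = (μ + n + 1) * Real.Gamma (μ + n + 1) := by
    rw [show μ + ↑(n + 1) + 1 = μ + n + 1 + 1 by push_cast; ring,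
      Real.Gamma_add_one (by linarith)]
  have h3 : Real.Gamma (2 * μ + ↑(n + 1) + 1) =
      (2 * μ + n + 1) * Real.Gamma (2 * μ + n + 1) := by
    rw [show 2 * μ + ↑(n + 1) + 1 = 2 * μ + n + 1 + 1 by push_cast; ring,
      Real.Gamma_add_one (by linarith)]
  have := Real.Gamma_pos_of_pos (by linarith : (0 : ℝ) < μ + n + 1)
  have := Real.Gamma_pos_of_pos (by linarith : (0 : ℝ) < 2 * μ + n + 1)
  have := n.factorial_pos
  have : (0 : ℝ) < μ + n + 1 := by linarith
  have : (0 : ℝ) < 2 * μ + n + 1 := by linarith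
  rw [cauchySq_besselCoeff hμ, cauchySq_besselCoeff hμ, h1, h2, h3, Nat.factorial_succ]
  push_cast
  field_simp

theorem cauchySq_besselCoeff_add_one (hμ : -1 / 2 < μ) (n : ℕ) :
    2 * (2 * μ + 2 * n + 3) * cauchySq (besselCoeff (μ + 1)) n =
      (n + 1) * (n + 2) * (μ + n + 2) * cauchySq (besselCoeff μ) (n + 2) := by
  have hn : (0 : ℝ) ≤ n := n.cast_nonneg
  have h1 : Real.Gamma (2 * μ + 2 * ↑(n + 2) + 1) =
      (2 * μ + 2 * n + 4) * ((2 * μ + 2 * n + 3) * Real.Gamma (2 * (μ + 1) + 2 * n + 1)) := by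
    rw [show 2 * μ + 2 * ↑(n + 2) + 1 = 2 * (μ + 1) + 2 * n + 1 + 1 + 1 by push_cast; ring,
      Real.Gamma_add_one (by linarith), Real.Gamma_add_one (by linarith)]
    ring
  have h2 : Real.Gamma (μ + ↑(n + 2) + 1) = (μ + n + 2) * Real.Gamma (μ + 1 + n + 1) := by
    rw [show μ + ↑(n + 2) + 1 = μ + 1 + n + 1 + 1 by push_cast; ring,
      Real.Gamma_add_one (by linarith)]
    ring
  have h3 : Real.Gamma (2 * μ + ↑(n + 2) + 1) = Real.Gamma (2 * (μ + 1) + n + 1) := by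
    congr 1
    push_cast
    ring
  have := Real.Gamma_pos_of_pos (by linarith : (0 : ℝ) < μ + 1 + n + 1)
  have := Real.Gamma_pos_of_pos (by linarith : (0 : ℝ) < 2 * (μ + 1) + n + 1)
  have := n.factorial_pos
  have : (0 : ℝ) < μ + n + 2 := by linarith
  rw [cauchySq_besselCoeff (by linarith), cauchySq_besselCoeff hμ, h1, h2, h3,
    Nat.factorial_succ, Nat.factorial_succ]
  push_cast
  field_simp
  ring

theorem sum_antidiagonal_mul_besselCoeff (n : ℕ) :
    ∑ p ∈ antidiagonal (n + 2), (p.1 * p.2 : ℝ) * (besselCoeff μ p.1 * besselCoeff μ p.2) =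
      cauchySq (besselCoeff (μ + 1)) n := by
  rw [Nat.sum_antidiagonal_succ, Nat.sum_antidiagonal_succ', cauchySq]
  simp only [Nat.cast_zero, zero_mul, mul_zero, zero_add, ← succ_mul_besselCoeff_succ]
  refine sum_congr rfl fun p _ => ?_
  push_cast
  ring

theorem two_mul_sum_antidiagonal_succ_mul_besselCoeff (hμ : -1 / 2 < μ) (n : ℕ) :
    2 * (2 * μ + 2 * n + 1) * ∑ p ∈ antidiagonal (n + 1),
        (p.1 * p.2 : ℝ) * (besselCoeff μ p.1 * besselCoeff μ p.2) =
      n * (n + 1) * (μ + n + 1) * cauchySq (besselCoeff μ) (n + 1) := by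
  cases n with
  | zero => simp [Nat.sum_antidiagonal_succ]
  | succ k =>
    rw [sum_antidiagonal_mul_besselCoeff]
    push_cast
    linear_combination cauchySq_besselCoeff_add_one hμ k

end besselCoeff

section ratio

variable {ν : ℝ}

theorem cauchySq_sub_mul_cauchySq_besselCoeff (m : ℕ) :
    cauchySq (fun k => (2 * k + ν + 1 / 2) * besselCoeff ν k) m -
        (ν ^ 2 - 1 / 4) * cauchySq (besselCoeff ν) m =
      4 * ∑ p ∈ antidiagonal m, (p.1 * p.2 : ℝ) * (besselCoeff ν p.1 * besselCoeff ν p.2) +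
        (2 * ν + 1) * (m + 1 / 2) * cauchySq (besselCoeff ν) m := by
  simp only [cauchySq, mul_sum, ← sum_sub_distrib, ← sum_add_distrib]
  refine sum_congr rfl fun p hp => ?_
  rw [← mem_antidiagonal.mp hp]
  push_cast
  ring

theorem four_mul_cauchySq_besselCoeff_le (hν : 1 / 2 ≤ ν) (n : ℕ) :
    4 * cauchySq (besselCoeff ν) n ≤
      cauchySq (fun k => (2 * k + ν + 1 / 2) * besselCoeff ν k) (n + 1) -
        (ν ^ 2 - 1 / 4) * cauchySq (besselCoeff ν) (n + 1) := by
  have hA := cauchySq_besselCoeff_succ (μ := ν) (by linarith) n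
  have hX := two_mul_sum_antidiagonal_succ_mul_besselCoeff (μ := ν) (by linarith) n
  have hV : 0 ≤ cauchySq (besselCoeff ν) (n + 1) := sum_nonneg fun p _ =>
    mul_nonneg (besselCoeff_pos (by linarith) _).le (besselCoeff_pos (by linarith) _).le
  have hD : 0 < 2 * ν + 2 * n + 1 := by positivity
  rw [cauchySq_sub_mul_cauchySq_besselCoeff, ← sub_nonneg, ← mul_nonneg_iff_of_pos_left hD]
  convert mul_nonneg (mul_nonneg (by linarith : 0 ≤ 2 * ν + 1) (sub_nonneg.2 hν)) hV using 1
  push_cast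
  linear_combination 2 * hX - 2 * hA

theorem hasSum_besselCoeff_mul_pow (hν : 0 < ν) (y : ℝ) :
    HasSum (fun k => (2 * k + ν + 1 / 2) * besselCoeff ν k * y ^ k)
      (2 * ∑' k, besselCoeff (ν - 1) k * y ^ k -
        (ν - 1 / 2) * ∑' k, besselCoeff ν k * y ^ k) := by
  refine (((summable_besselCoeff_mul_pow (by linarith) y).hasSum.mul_left 2).sub
    ((summable_besselCoeff_mul_pow (by linarith) y).hasSum.mul_left (ν - 1 / 2))).congr_fun
    fun k => ?_
  rw [besselCoeff_sub_one hν]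
  ring

theorem mul_sq_tsum_besselCoeff_lt (hν : 1 / 2 ≤ ν) {y : ℝ} (hy : 0 < y) :
    (ν ^ 2 - 1 / 4 + 4 * y) * (∑' k, besselCoeff ν k * y ^ k) ^ 2 <
      (∑' k, (2 * k + ν + 1 / 2) * besselCoeff ν k * y ^ k) ^ 2 := by
  set b := besselCoeff ν
  set u : ℕ → ℝ := fun k => (2 * k + ν + 1 / 2) * b k
  have hb : ∀ k, 0 < b k := besselCoeff_pos (by linarith)
  have hV := hasSum_cauchySq_mul_pow (summable_besselCoeff_mul_pow (by linarith) y)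
    fun k => (mul_pos (hb k) (pow_pos hy k)).le
  have hW := hasSum_cauchySq_mul_pow
    (hasSum_besselCoeff_mul_pow (ν := ν) (by linarith) y).summable
    fun k => by have := hb k; positivity
  rw [← hV.tsum_eq, ← hW.tsum_eq]
  have hlt : ∑' n, 4 * y * (cauchySq b n * y ^ n) <
      ∑' n, (cauchySq u n * y ^ n - (ν ^ 2 - 1 / 4) * (cauchySq b n * y ^ n)) := by
    refine tsum_lt_tsum_of_le_succ (hW.summable.sub (hV.summable.mul_left _))
      (hV.summable.mul_left _) ?_ fun n => ?_
    · have := hb 0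
      simp only [cauchySq, u, Nat.antidiagonal_zero, sum_singleton, pow_zero, mul_one]
      push_cast
      nlinarith
    · have := mul_le_mul_of_nonneg_right (four_mul_cauchySq_besselCoeff_le hν n)
        (pow_nonneg hy.le (n + 1))
      rw [pow_succ] at this ⊢
      linarith
  rw [hW.summable.tsum_sub (hV.summable.mul_left _), tsum_mul_left, tsum_mul_left] at hlt
  linarith

theorem sqrt_mul_tsum_besselCoeff_lt (hν : 1 / 2 ≤ ν) {y : ℝ} (hy : 0 < y) :
    √(ν ^ 2 - 1 / 4 + 4 * y) * ∑' k, besselCoeff ν k * y ^ k <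
      2 * ∑' k, besselCoeff (ν - 1) k * y ^ k -
        (ν - 1 / 2) * ∑' k, besselCoeff ν k * y ^ k := by
  have hU := hasSum_besselCoeff_mul_pow (ν := ν) (by linarith) y
  have hU0 := hU.nonneg fun k => by
    have := besselCoeff_pos (μ := ν) (by linarith) k
    positivity
  rw [← hU.tsum_eq] at hU0 ⊢
  refine lt_of_pow_lt_pow_left₀ 2 hU0 ?_
  rw [mul_pow, Real.sq_sqrt (by nlinarith)]
  exact mul_sq_tsum_besselCoeff_lt hν hy

end ratio

theorem besselI_ratio_lower_bound_03 (ν x : ℝ) (hν : 1 / 2 ≤ ν) (hx : 0 < x) :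
    besselI (ν - 1) x / besselI ν x >
      (ν - 1 / 2 + Real.sqrt (ν ^ 2 - 1 / 4 + x ^ 2)) / x := by
  have ht : 0 < x / 2 := by positivity
  have key := sqrt_mul_tsum_besselCoeff_lt hν (pow_pos ht 2)
  rw [show 4 * (x / 2) ^ 2 = x ^ 2 by ring] at key
  have hS := tsum_besselCoeff_mul_pow_pos (μ := ν) (by linarith) (pow_pos ht 2)
  have hp := Real.rpow_pos_of_pos ht ν
  rw [besselI_eq_rpow_mul_tsum _ hx, besselI_eq_rpow_mul_tsum _ hx, Real.rpow_sub_one ht.ne',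
    gt_iff_lt, div_lt_div_iff₀ hx (by positivity)]
  calc _ = (x / 2) ^ ν * ((ν - 1 / 2 + √(ν ^ 2 - 1 / 4 + x ^ 2)) *
          ∑' k, besselCoeff ν k * ((x / 2) ^ 2) ^ k) := by ring
    _ < (x / 2) ^ ν * (2 * ∑' k, besselCoeff (ν - 1) k * ((x / 2) ^ 2) ^ k) :=
        mul_lt_mul_of_pos_left (by linarith) hp
    _ = _ := by field_simp
end

section
/- For every ν ≥ 0 and every x > 0, I_{ν−1}(x)/I_ν(x) > (ν + √(ν² + (ν/(ν+1))·x²))/x. -/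
open Real

-- Both sides vanish at the poles `s = 0, -1, -2, …`, where Mathlib sets `Gamma s = 0`.
theorem Real.one_div_Gamma_eq_self_mul_one_div_Gamma_add_one (s : ℝ) :
    1 / Gamma s = s * (1 / Gamma (s + 1)) := by
  rcases eq_or_ne s 0 with rfl | hs
  · simp
  · rw [Gamma_add_one hs]
    field_simp

noncomputable def besselTerm (ν x : ℝ) (k : ℕ) : ℝ :=
  (x / 2) ^ (2 * (k : ℝ) + ν) / ((Nat.factorial k : ℝ) * Gamma ((k : ℝ) + ν + 1))

theorem besselI_eq_tsum (ν x : ℝ) : besselI ν x = ∑' k, besselTerm ν x k := rfl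

theorem two_mul_div_add_one_add_le {ν a b : ℝ} (hν : 0 ≤ ν) (ha : 0 ≤ a) (hb : 0 ≤ b) :
    2 * (ν / (ν + 1)) + (a + b) / ((a + ν + 1) * (b + ν + 1)) ≤
      (a + ν) / (b + ν + 1) + (b + ν) / (a + ν + 1) := by
  have key : (a + ν) / (b + ν + 1) + (b + ν) / (a + ν + 1) - 2 * (ν / (ν + 1)) -
      (a + b) / ((a + ν + 1) * (b + ν + 1)) =
        ((ν + 1) * (a - b) ^ 2 + 2 * a * b) / ((ν + 1) * (a + ν + 1) * (b + ν + 1)) := by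
    field_simp
    ring
  have hrest : 0 ≤ ((ν + 1) * (a - b) ^ 2 + 2 * a * b) / ((ν + 1) * (a + ν + 1) * (b + ν + 1)) := by
    positivity
  linarith

section

variable {ν x : ℝ}

theorem besselTerm_pos (hν : -1 < ν) (hx : 0 < x) (k : ℕ) : 0 < besselTerm ν x k := by
  have : (0 : ℝ) ≤ k := k.cast_nonneg
  unfold besselTerm
  have := Gamma_pos_of_pos (s := k + ν + 1) (by linarith)
  positivity

theorem summable_norm_besselTerm (ν : ℝ) (hx : 0 < x) : Summable fun k ↦ ‖besselTerm ν x k‖ := by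
  have hx2 : 0 < x / 2 := by positivity
  refine .of_norm_bounded_eventually_nat
    ((Real.summable_pow_div_factorial ((x / 2) ^ 2)).mul_left ((x / 2) ^ ν)) ?_
  obtain ⟨N, hN⟩ := exists_nat_ge (1 - ν)
  filter_upwards [Filter.eventually_ge_atTop N] with k hk
  have hk2 : 2 ≤ (k : ℝ) + ν + 1 := by linarith [(Nat.cast_le (α := ℝ)).2 hk]
  have hΓ : 1 ≤ Gamma (k + ν + 1) := by
    simpa [Gamma_two] using Gamma_strictMonoOn_Ici.monotoneOn (Set.mem_Ici.2 le_rfl) hk2 hk2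
  have hpow : (x / 2) ^ (2 * (k : ℝ) + ν) = (x / 2) ^ ν * ((x / 2) ^ 2) ^ k := by
    rw [add_comm, rpow_add hx2, ← pow_mul, ← rpow_natCast, Nat.cast_mul, Nat.cast_two]
  rw [norm_norm, Real.norm_of_nonneg (by unfold besselTerm; positivity), besselTerm, hpow,
    mul_div_assoc]
  gcongr
  exact le_mul_of_one_le_right (by positivity) hΓ

theorem summable_besselTerm (ν : ℝ) (hx : 0 < x) : Summable (besselTerm ν x) :=
  (summable_norm_besselTerm ν hx).of_norm

theorem besselI_pos (hν : -1 < ν) (hx : 0 < x) : 0 < besselI ν x :=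
  (summable_besselTerm ν hx).tsum_pos (fun k ↦ (besselTerm_pos hν hx k).le) 0
    (besselTerm_pos hν hx 0)

theorem half_mul_besselTerm_sub_one (hx : 0 < x) (k : ℕ) :
    x / 2 * besselTerm (ν - 1) x k = (k + ν) * besselTerm ν x k := by
  have hpow : (x / 2) ^ (2 * (k : ℝ) + ν) = (x / 2) ^ (2 * (k : ℝ) + (ν - 1)) * (x / 2) := by
    rw [← rpow_add_one (by positivity)]
    ring_nf
  simp only [besselTerm, div_mul_eq_div_mul_one_div, hpow,
    show (k : ℝ) + (ν - 1) + 1 = k + ν by ring,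
    one_div_Gamma_eq_self_mul_one_div_Gamma_add_one (k + ν)]
  ring

theorem succ_mul_besselTerm_succ (hx : 0 < x) (k : ℕ) :
    (k + 1) * besselTerm ν x (k + 1) = x / 2 * besselTerm (ν + 1) x k := by
  have hpow :
      (x / 2) ^ (2 * ((k + 1 : ℕ) : ℝ) + ν) = (x / 2) ^ (2 * (k : ℝ) + (ν + 1)) * (x / 2) := by
    rw [← rpow_add_one (by positivity)]
    push_cast
    ring_nf
  simp only [besselTerm, hpow, Nat.factorial_succ,
    show ((k + 1 : ℕ) : ℝ) + ν + 1 = k + (ν + 1) + 1 by push_cast; ring]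
  push_cast
  field_simp

theorem mul_besselI_sub_one (hx : 0 < x) :
    x * besselI (ν - 1) x = 2 * ν * besselI ν x + x * besselI (ν + 1) x := by
  set f : ℕ → ℝ := fun k ↦ x / 2 * besselTerm (ν - 1) x k - ν * besselTerm ν x k
  have hf : ∀ k : ℕ, f k = k * besselTerm ν x k := fun k ↦ by
    simp only [f, half_mul_besselTerm_sub_one hx]
    ring
  have hsum : Summable f :=
    ((summable_besselTerm _ hx).mul_left _).sub ((summable_besselTerm _ hx).mul_left _)
  have htsum : ∑' k, f k = x / 2 * besselI (ν - 1) x - ν * besselI ν x := by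
    rw [Summable.tsum_sub ((summable_besselTerm _ hx).mul_left _)
      ((summable_besselTerm _ hx).mul_left _), tsum_mul_left, tsum_mul_left]
    rfl
  have hshift : ∑' k, f k = x / 2 * besselI (ν + 1) x := by
    rw [hsum.tsum_eq_zero_add, hf 0, Nat.cast_zero, zero_mul, zero_add, besselI_eq_tsum,
      ← tsum_mul_left]
    congr 1 with k
    rw [hf, ← succ_mul_besselTerm_succ hx]
    push_cast
    rfl
  linarith

theorem besselTerm_sub_one_mul_besselTerm_add_one (hν : 0 ≤ ν) (hx : 0 < x) (j k : ℕ) :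
    besselTerm (ν - 1) x j * besselTerm (ν + 1) x k =
      besselTerm ν x j * besselTerm ν x k * ((j + ν) / (k + ν + 1)) := by
  have hj := half_mul_besselTerm_sub_one (ν := ν) hx j
  have hk := half_mul_besselTerm_sub_one (ν := ν + 1) hx k
  rw [add_sub_cancel_right] at hk
  have hk_pos : (0 : ℝ) < k + ν + 1 := by positivity
  field_simp
  linear_combination besselTerm ν x k * hj - besselTerm (ν - 1) x j * hk

theorem besselI_turan (hν : 0 ≤ ν) (hx : 0 < x) :
    ν / (ν + 1) * besselI ν x ^ 2 < besselI (ν - 1) x * besselI (ν + 1) x := by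
  set F : ℕ × ℕ → ℝ := fun p ↦ besselTerm (ν - 1) x p.1 * besselTerm (ν + 1) x p.2
  set G : ℕ × ℕ → ℝ := fun p ↦ besselTerm ν x p.1 * besselTerm ν x p.2
  have hF : besselI (ν - 1) x * besselI (ν + 1) x = ∑' p, F p :=
    tsum_mul_tsum_of_summable_norm (summable_norm_besselTerm _ hx) (summable_norm_besselTerm _ hx)
  have hG : besselI ν x ^ 2 = ∑' p, G p :=
    (sq _).trans <|
      tsum_mul_tsum_of_summable_norm (summable_norm_besselTerm _ hx) (summable_norm_besselTerm _ hx)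
  have hFs : Summable F :=
    summable_mul_of_summable_norm (summable_norm_besselTerm _ hx) (summable_norm_besselTerm _ hx)
  have hGs : Summable G :=
    summable_mul_of_summable_norm (summable_norm_besselTerm _ hx) (summable_norm_besselTerm _ hx)
  have hswap : ∑' p : ℕ × ℕ, F p.swap = ∑' p, F p := (Equiv.prodComm ℕ ℕ).tsum_eq F
  have hsym (p : ℕ × ℕ) : F p + F p.swap =
      G p * ((p.1 + ν) / (p.2 + ν + 1) + (p.2 + ν) / (p.1 + ν + 1)) := by
    simp only [F, G, Prod.fst_swap, Prod.snd_swap, besselTerm_sub_one_mul_besselTerm_add_one hν hx]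
    ring
  have hG_pos (p : ℕ × ℕ) : 0 < G p :=
    mul_pos (besselTerm_pos (by linarith) hx _) (besselTerm_pos (by linarith) hx _)
  have hle (p : ℕ × ℕ) : 2 * (ν / (ν + 1)) * G p ≤ F p + F p.swap := by
    rw [hsym, mul_comm]
    refine mul_le_mul_of_nonneg_left ?_ (hG_pos p).le
    exact (le_add_of_nonneg_right (by positivity)).trans
      (two_mul_div_add_one_add_le hν p.1.cast_nonneg p.2.cast_nonneg)
  have hlt : 2 * (ν / (ν + 1)) * G (0, 1) < F (0, 1) + F (0, 1).swap := by
    rw [hsym, mul_comm]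
    refine mul_lt_mul_of_pos_left ?_ (hG_pos _)
    exact (lt_add_of_pos_right _ (by norm_num; positivity)).trans_le
      (two_mul_div_add_one_add_le hν (Nat.cast_nonneg 0) (Nat.cast_nonneg 1))
  have hFs' : Summable fun p : ℕ × ℕ ↦ F p.swap := (Equiv.prodComm ℕ ℕ).summable_iff.2 hFs
  have hsum_lt := (hGs.mul_left (2 * (ν / (ν + 1)))).tsum_lt_tsum hle hlt (hFs.add hFs')
  rw [tsum_mul_left, hFs.tsum_add hFs', hswap] at hsum_lt
  rw [hF, hG]
  linarith

end

theorem add_sqrt_div_lt_div_of_recurrence_of_turan {ν x c A B C : ℝ} (hν : 0 ≤ ν) (hx : 0 < x)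
    (hB : 0 < B) (hC : 0 < C) (hrec : x * A = 2 * ν * B + x * C) (hturan : c * B ^ 2 < A * C) :
    (ν + √(ν ^ 2 + c * x ^ 2)) / x < A / B := by
  have hpos : 0 < x * A - ν * B := by nlinarith
  have hsq : (ν ^ 2 + c * x ^ 2) * B ^ 2 < (x * A - ν * B) ^ 2 := by
    have hexpand : (x * A - ν * B) ^ 2 = ν ^ 2 * B ^ 2 + x ^ 2 * (A * C) := by
      linear_combination (x * A) * hrec
    nlinarith [mul_lt_mul_of_pos_left hturan (by positivity : 0 < x ^ 2)]
  have hsqrt : √(ν ^ 2 + c * x ^ 2) * B < x * A - ν * B := by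
    calc √(ν ^ 2 + c * x ^ 2) * B = √((ν ^ 2 + c * x ^ 2) * B ^ 2) := by
          rw [sqrt_mul' _ (sq_nonneg B), sqrt_sq hB.le]
      _ < x * A - ν * B := (sqrt_lt' hpos).2 hsq
  rw [div_lt_div_iff₀ hx hB]
  linarith

theorem besselI_ratio_lower_bound_20 (ν x : ℝ) (hν : 0 ≤ ν) (hx : 0 < x) :
    besselI (ν - 1) x / besselI ν x >
      (ν + Real.sqrt (ν ^ 2 + (ν / (ν + 1)) * x ^ 2)) / x :=
  add_sqrt_div_lt_div_of_recurrence_of_turan hν hx (besselI_pos (by linarith) hx)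
    (besselI_pos (by linarith) hx) (mul_besselI_sub_one hx) (besselI_turan hν hx)
end

section
/- For every ν ≥ 0 and every x > 0, I_{ν−1}(x)/I_ν(x) < (ν − 2 + √((ν + 2)² + ((ν + 2)/(ν + 1))·x²))/x. -/
namespace BesselProof

open Real Finset

noncomputable def bT (μ x : ℝ) (k : ℕ) : ℝ :=
  (x / 2) ^ (2 * (k : ℝ) + μ) / ((Nat.factorial k : ℝ) * Real.Gamma ((k : ℝ) + μ + 1))

lemma besselI_eq (μ x : ℝ) : besselI μ x = ∑' k, bT μ x k := rfl

lemma fact_pos' (k : ℕ) : (0:ℝ) < (Nat.factorial k : ℝ) := by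
  exact_mod_cast Nat.factorial_pos k

lemma gamma_fact_le {μ : ℝ} (hμ : 0 ≤ μ) (k : ℕ) :
    (Nat.factorial k : ℝ) * Real.Gamma (μ + 1) ≤ Real.Gamma ((k : ℝ) + μ + 1) := by
  induction k with
  | zero => simp
  | succ n ih =>
    have hpos : (0:ℝ) < (n:ℝ) + μ + 1 := by positivity
    have h1 : Real.Gamma (((n + 1 : ℕ) : ℝ) + μ + 1)
        = ((n:ℝ) + μ + 1) * Real.Gamma ((n:ℝ) + μ + 1) := by
      push_cast
      rw [show (n:ℝ) + 1 + μ + 1 = ((n:ℝ) + μ + 1) + 1 by ring,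
        Real.Gamma_add_one (ne_of_gt hpos)]
    have hfact : ((Nat.factorial (n+1) : ℕ) : ℝ) = ((n:ℝ) + 1) * (Nat.factorial n : ℝ) := by
      push_cast [Nat.factorial_succ]; ring
    have hGpos : 0 < Real.Gamma ((n:ℝ) + μ + 1) := Real.Gamma_pos_of_pos hpos
    have hfp := fact_pos' n
    have hG1 : 0 < Real.Gamma (μ + 1) := Real.Gamma_pos_of_pos (by linarith)
    rw [h1, hfact]
    nlinarith [ih]

lemma bT_pos {μ x : ℝ} (hμ : 0 ≤ μ) (hx : 0 < x) (k : ℕ) : 0 < bT μ x k := by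
  have h2 : (0:ℝ) < x / 2 := by linarith
  have hG : 0 < Real.Gamma ((k:ℝ) + μ + 1) := Real.Gamma_pos_of_pos (by positivity)
  exact div_pos (Real.rpow_pos_of_pos h2 _) (mul_pos (fact_pos' k) hG)

lemma bT_summable {μ x : ℝ} (hμ : 0 ≤ μ) (hx : 0 < x) : Summable (bT μ x) := by
  have h2 : (0:ℝ) < x / 2 := by linarith
  have hG1 : 0 < Real.Gamma (μ + 1) := Real.Gamma_pos_of_pos (by linarith)
  have hbsum : Summable (fun k : ℕ =>
      (x/2) ^ μ / Real.Gamma (μ+1) * (((x/2)^2) ^ k / (Nat.factorial k : ℝ))) :=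
    (Real.summable_pow_div_factorial ((x/2)^2)).mul_left _
  refine Summable.of_nonneg_of_le (fun k => (bT_pos hμ hx k).le) (fun k => ?_) hbsum
  have hG : 0 < Real.Gamma ((k:ℝ) + μ + 1) := Real.Gamma_pos_of_pos (by positivity)
  have hexp : (x/2) ^ (2*(k:ℝ) + μ) = ((x/2)^2) ^ k * (x/2) ^ μ := by
    rw [Real.rpow_add h2, show (2*(k:ℝ)) = ((2*k : ℕ) : ℝ) by push_cast; ring,
      Real.rpow_natCast, pow_mul]
  have hnum : (0:ℝ) ≤ ((x/2)^2) ^ k * (x/2) ^ μ := by positivity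
  have hden : (Nat.factorial k : ℝ) * Real.Gamma (μ+1)
      ≤ (Nat.factorial k : ℝ) * Real.Gamma ((k:ℝ) + μ + 1) := by
    have hf1 : (1:ℝ) ≤ (Nat.factorial k : ℝ) := by
      exact_mod_cast Nat.one_le_iff_ne_zero.mpr (Nat.factorial_pos k).ne'
    have h1 : Real.Gamma (μ+1) ≤ Real.Gamma ((k:ℝ) + μ + 1) := by
      nlinarith [gamma_fact_le hμ k]
    exact mul_le_mul_of_nonneg_left h1 (fact_pos' k).le
  have hdenpos : (0:ℝ) < (Nat.factorial k : ℝ) * Real.Gamma (μ+1) :=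
    mul_pos (fact_pos' k) hG1
  have step1 : bT μ x k = ((x/2)^2) ^ k * (x/2) ^ μ
      / ((Nat.factorial k : ℝ) * Real.Gamma ((k:ℝ) + μ + 1)) := by
    rw [bT, hexp]
  have step2 : ((x/2)^2) ^ k * (x/2) ^ μ
      / ((Nat.factorial k : ℝ) * Real.Gamma ((k:ℝ) + μ + 1))
      ≤ ((x/2)^2) ^ k * (x/2) ^ μ / ((Nat.factorial k : ℝ) * Real.Gamma (μ+1)) :=
    div_le_div_of_nonneg_left hnum hdenpos hden
  have step3 : ((x/2)^2) ^ k * (x/2) ^ μ / ((Nat.factorial k : ℝ) * Real.Gamma (μ+1))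
      = (x/2) ^ μ / Real.Gamma (μ+1) * (((x/2)^2) ^ k / (Nat.factorial k : ℝ)) := by
    ring
  rw [step1]
  rw [← step3]
  exact step2

lemma bT_norm_summable {μ x : ℝ} (hμ : 0 ≤ μ) (hx : 0 < x) :
    Summable (fun k => ‖bT μ x k‖) := by
  apply (bT_summable hμ hx).congr
  intro k
  rw [Real.norm_eq_abs, abs_of_nonneg (bT_pos hμ hx k).le]

lemma besselI_pos {μ x : ℝ} (hμ : 0 ≤ μ) (hx : 0 < x) : 0 < besselI μ x := by
  rw [besselI_eq]
  exact Summable.tsum_pos (bT_summable hμ hx) (fun k => (bT_pos hμ hx k).le) 0 (bT_pos hμ hx 0)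

lemma besselI_recurrence {ν x : ℝ} (hν : 0 ≤ ν) (hx : 0 < x) :
    x * besselI (ν - 1) x = 2 * ν * besselI ν x + x * besselI (ν + 1) x := by
  have h2 : (0:ℝ) < x / 2 := by linarith
  have hx0 : x ≠ 0 := hx.ne'
  set g : ℕ → ℝ := fun k => 2 * ν / x * bT ν x k with hgdef
  set h : ℕ → ℝ := fun k => if k = 0 then 0 else bT (ν + 1) x (k - 1) with hhdef
  have key : ∀ k, bT (ν - 1) x k = g k + h k := by
    intro k
    cases k with
    | zero =>
      simp only [hhdef, if_pos rfl, hgdef, add_zero]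
      rcases eq_or_lt_of_le hν with hν0 | hν0
      · simp [bT, ← hν0, Real.Gamma_zero, show (0:ℝ) + (0 - 1) + 1 = 0 by ring]
      · have hG : Real.Gamma (ν + 1) = ν * Real.Gamma ν := Real.Gamma_add_one hν0.ne'
        have hGν : 0 < Real.Gamma ν := Real.Gamma_pos_of_pos hν0
        have hpow : (x/2) ^ (2*(0:ℝ) + ν) = (x/2) ^ (2*(0:ℝ) + (ν-1)) * (x/2) := by
          rw [show 2*(0:ℝ) + ν = (2*(0:ℝ) + (ν-1)) + 1 by ring,
            Real.rpow_add h2, Real.rpow_one]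
        simp only [bT, Nat.cast_zero, Nat.factorial_zero, Nat.cast_one, one_mul]
        rw [show (0:ℝ) + (ν - 1) + 1 = ν by ring, show (0:ℝ) + ν + 1 = ν + 1 by ring,
          hG, hpow]
        field_simp
    | succ n =>
      have hnpos : (0:ℝ) < (n:ℝ) + ν + 1 := by positivity
      have hGP : 0 < Real.Gamma ((n:ℝ) + ν + 1) := Real.Gamma_pos_of_pos hnpos
      have hG2 : Real.Gamma ((n:ℝ) + ν + 1 + 1) = ((n:ℝ) + ν + 1) * Real.Gamma ((n:ℝ) + ν + 1) :=
        Real.Gamma_add_one hnpos.ne'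
      have hfact : ((Nat.factorial (n+1) : ℕ) : ℝ) = ((n:ℝ) + 1) * (Nat.factorial n : ℝ) := by
        push_cast [Nat.factorial_succ]; ring
      have hpow1 : (x/2) ^ (2*(((n+1:ℕ)):ℝ) + (ν-1)) = (x/2) ^ (2*((n:ℕ):ℝ) + (ν+1)) := by
        push_cast; ring_nf
      have hpow2 : (x/2) ^ (2*(((n+1:ℕ)):ℝ) + ν) = (x/2) ^ (2*((n:ℕ):ℝ) + (ν+1)) * (x/2) := by
        rw [show 2*(((n+1:ℕ)):ℝ) + ν = (2*((n:ℕ):ℝ) + (ν+1)) + 1 by push_cast; ring,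
          Real.rpow_add h2, Real.rpow_one]
      have hne : h (n+1) = bT (ν + 1) x n := by simp [hhdef]
      rw [hne]
      simp only [bT, hgdef]
      rw [hpow1, hpow2, hfact]
      rw [show ((n+1:ℕ):ℝ) + (ν-1) + 1 = (n:ℝ) + ν + 1 by push_cast; ring,
        show ((n+1:ℕ):ℝ) + ν + 1 = ((n:ℝ) + ν + 1) + 1 by push_cast; ring,
        show ((n:ℕ):ℝ) + (ν+1) + 1 = ((n:ℝ) + ν + 1) + 1 by push_cast; ring,
        Real.Gamma_add_one hnpos.ne']
      have hfp := fact_pos' n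
      set A := (x/2) ^ (2*((n:ℕ):ℝ) + (ν+1)) with hA
      have hApos : 0 < A := Real.rpow_pos_of_pos h2 _
      field_simp
      ring
  have hgsum : Summable g := (bT_summable hν hx).mul_left _
  have hbsum1 : Summable (bT (ν+1) x) := bT_summable (by linarith) hx
  have hhsum : Summable h := by
    have : Summable (fun n : ℕ => h (n+1)) := by
      apply hbsum1.congr
      intro n
      simp [hhdef]
    exact (summable_nat_add_iff 1).mp this
  have hsplit : besselI (ν - 1) x = (∑' k, g k) + (∑' k, h k) := by
    rw [besselI_eq, tsum_congr key, Summable.tsum_add hgsum hhsum]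
  have hth : (∑' k, h k) = besselI (ν+1) x := by
    rw [Summable.tsum_eq_zero_add hhsum]
    have h0 : h 0 = 0 := by simp [hhdef]
    have hsh : ∀ n : ℕ, h (n+1) = bT (ν+1) x n := by intro n; simp [hhdef]
    rw [h0, zero_add, tsum_congr hsh, besselI_eq]
  have htg : (∑' k, g k) = 2*ν/x * besselI ν x := by
    rw [besselI_eq, hgdef]
    exact tsum_mul_left
  rw [hsplit, htg, hth]
  field_simp

lemma core_ineq {ν p q : ℝ} (hν : 0 ≤ ν) (hp : ν + 1 ≤ p) (hq : ν + 1 ≤ q) :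
    2 * (ν+1) * ((p+1)*(q+1)) ≤ (ν+2) * (p*(p+1) + q*(q+1)) := by
  nlinarith [sq_nonneg (p - q),
    mul_nonneg (by linarith : (0:ℝ) ≤ p - (ν+1)) (by linarith : (0:ℝ) ≤ q - (ν+1))]

lemma scalar_ineq {ν p q P Q c y : ℝ} (hν : 0 ≤ ν) (hp : ν+1 ≤ p) (hq : ν+1 ≤ q)
    (hP : 0 < P) (hQ : 0 < Q) (hc : 0 < c) (hy : 0 ≤ y) :
    2*(ν+1) * (y/(c*((p*P)*(q*Q)))) ≤
      (ν+2) * (y/(c*(P*((q+1)*(q*Q)))) + y/(c*(Q*((p+1)*(p*P))))) := by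
  have hp0 : (0:ℝ) < p := by linarith
  have hq0 : (0:ℝ) < q := by linarith
  have key := core_ineq hν hp hq
  have hdiff : (ν+2) * (y/(c*(P*((q+1)*(q*Q)))) + y/(c*(Q*((p+1)*(p*P)))))
      - 2*(ν+1) * (y/(c*((p*P)*(q*Q))))
      = y * ((ν+2)*(p*(p+1)+q*(q+1)) - 2*(ν+1)*((p+1)*(q+1)))
        / (c*(P*Q*(p*(p+1))*(q*(q+1)))) := by
    field_simp
  have hpos : 0 ≤ y * ((ν+2)*(p*(p+1)+q*(q+1)) - 2*(ν+1)*((p+1)*(q+1)))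
      / (c*(P*Q*(p*(p+1))*(q*(q+1)))) := by
    apply div_nonneg (mul_nonneg hy (by linarith)) (by positivity)
  linarith

lemma bT_prod_eq {μ₁ μ₂ x : ℝ} (hx : 0 < x) (k m : ℕ) :
    bT μ₁ x k * bT μ₂ x m = (x/2) ^ (2*(k:ℝ) + 2*(m:ℝ) + μ₁ + μ₂)
      / (((Nat.factorial k : ℝ) * Real.Gamma ((k:ℝ) + μ₁ + 1))
        * ((Nat.factorial m : ℝ) * Real.Gamma ((m:ℝ) + μ₂ + 1))) := by
  have h2 : (0:ℝ) < x / 2 := by linarith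
  rw [bT, bT, div_mul_div_comm, ← Real.rpow_add h2]
  congr 2
  ring

lemma pair' {ν x : ℝ} (hν : 0 ≤ ν) (hx : 0 < x) (k m : ℕ) :
    2 * (ν+1) * (bT (ν+1) x k * bT (ν+1) x m) ≤
      (ν+2) * (bT ν x k * bT (ν+2) x m + bT ν x m * bT (ν+2) x k) := by
  have h2 : (0:ℝ) < x / 2 := by linarith
  have hppos : (0:ℝ) < (k:ℝ) + ν + 1 := by positivity
  have hqpos : (0:ℝ) < (m:ℝ) + ν + 1 := by positivity
  have hP : 0 < Real.Gamma ((k:ℝ) + ν + 1) := Real.Gamma_pos_of_pos hppos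
  have hQ : 0 < Real.Gamma ((m:ℝ) + ν + 1) := Real.Gamma_pos_of_pos hqpos
  -- Gamma expansions
  have hGk1 : Real.Gamma ((k:ℝ) + (ν+1) + 1)
      = ((k:ℝ) + ν + 1) * Real.Gamma ((k:ℝ) + ν + 1) := by
    rw [show (k:ℝ) + (ν+1) + 1 = ((k:ℝ) + ν + 1) + 1 by ring,
      Real.Gamma_add_one hppos.ne']
  have hGm1 : Real.Gamma ((m:ℝ) + (ν+1) + 1)
      = ((m:ℝ) + ν + 1) * Real.Gamma ((m:ℝ) + ν + 1) := by
    rw [show (m:ℝ) + (ν+1) + 1 = ((m:ℝ) + ν + 1) + 1 by ring,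
      Real.Gamma_add_one hqpos.ne']
  have hGk2 : Real.Gamma ((k:ℝ) + (ν+2) + 1)
      = ((k:ℝ) + ν + 1 + 1) * (((k:ℝ) + ν + 1) * Real.Gamma ((k:ℝ) + ν + 1)) := by
    rw [show (k:ℝ) + (ν+2) + 1 = (((k:ℝ) + ν + 1) + 1) + 1 by ring,
      Real.Gamma_add_one (by positivity), Real.Gamma_add_one hppos.ne']
  have hGm2 : Real.Gamma ((m:ℝ) + (ν+2) + 1)
      = ((m:ℝ) + ν + 1 + 1) * (((m:ℝ) + ν + 1) * Real.Gamma ((m:ℝ) + ν + 1)) := by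
    rw [show (m:ℝ) + (ν+2) + 1 = (((m:ℝ) + ν + 1) + 1) + 1 by ring,
      Real.Gamma_add_one (by positivity), Real.Gamma_add_one hqpos.ne']
  have e1 := bT_prod_eq (μ₁ := ν+1) (μ₂ := ν+1) hx k m
  have e2 := bT_prod_eq (μ₁ := ν) (μ₂ := ν+2) hx k m
  have e3 := bT_prod_eq (μ₁ := ν) (μ₂ := ν+2) hx m k
  rw [hGk1, hGm1] at e1
  rw [hGm2] at e2
  rw [hGk2] at e3
  have hexp2 : (x/2) ^ (2*(k:ℝ) + 2*(m:ℝ) + ν + (ν+2))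
      = (x/2) ^ (2*(k:ℝ) + 2*(m:ℝ) + (ν+1) + (ν+1)) := by
    congr 1; ring
  have hexp3 : (x/2) ^ (2*(m:ℝ) + 2*(k:ℝ) + ν + (ν+2))
      = (x/2) ^ (2*(k:ℝ) + 2*(m:ℝ) + (ν+1) + (ν+1)) := by
    congr 1; ring
  rw [hexp2] at e2
  rw [hexp3] at e3
  set y := (x/2) ^ (2*(k:ℝ) + 2*(m:ℝ) + (ν+1) + (ν+1)) with hy
  have hy0 : 0 ≤ y := (Real.rpow_pos_of_pos h2 _).le
  rw [e1, e2, e3]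
  have hsc := scalar_ineq (p := (k:ℝ) + ν + 1) (q := (m:ℝ) + ν + 1)
    (P := Real.Gamma ((k:ℝ) + ν + 1)) (Q := Real.Gamma ((m:ℝ) + ν + 1))
    (c := (Nat.factorial k : ℝ) * (Nat.factorial m : ℝ)) (y := y) hν
    (by have : (0:ℝ) ≤ (k:ℝ) := Nat.cast_nonneg k; linarith)
    (by have : (0:ℝ) ≤ (m:ℝ) := Nat.cast_nonneg m; linarith)
    hP hQ (mul_pos (fact_pos' k) (fact_pos' m)) hy0
  calc 2 * (ν+1) * (y / ((Nat.factorial k : ℝ) * (((k:ℝ) + ν + 1) * Real.Gamma ((k:ℝ) + ν + 1))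
        * ((Nat.factorial m : ℝ) * (((m:ℝ) + ν + 1) * Real.Gamma ((m:ℝ) + ν + 1)))))
      = 2*(ν+1) * (y/(((Nat.factorial k : ℝ) * (Nat.factorial m : ℝ))
        * ((((k:ℝ) + ν + 1) * Real.Gamma ((k:ℝ) + ν + 1))
          * (((m:ℝ) + ν + 1) * Real.Gamma ((m:ℝ) + ν + 1))))) := by ring_nf
    _ ≤ (ν+2) * (y/(((Nat.factorial k : ℝ) * (Nat.factorial m : ℝ))
          * (Real.Gamma ((k:ℝ) + ν + 1) * ((((m:ℝ) + ν + 1) + 1)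
            * (((m:ℝ) + ν + 1) * Real.Gamma ((m:ℝ) + ν + 1)))))
        + y/(((Nat.factorial k : ℝ) * (Nat.factorial m : ℝ))
          * (Real.Gamma ((m:ℝ) + ν + 1) * ((((k:ℝ) + ν + 1) + 1)
            * (((k:ℝ) + ν + 1) * Real.Gamma ((k:ℝ) + ν + 1)))))) := hsc
    _ = (ν+2) * (y / ((Nat.factorial k : ℝ) * Real.Gamma ((k:ℝ) + ν + 1)
          * ((Nat.factorial m : ℝ) * (((m:ℝ) + ν + 1 + 1)
            * (((m:ℝ) + ν + 1) * Real.Gamma ((m:ℝ) + ν + 1)))))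
        + y / ((Nat.factorial m : ℝ) * Real.Gamma ((m:ℝ) + ν + 1)
          * ((Nat.factorial k : ℝ) * (((k:ℝ) + ν + 1 + 1)
            * (((k:ℝ) + ν + 1) * Real.Gamma ((k:ℝ) + ν + 1)))))) := by ring_nf

lemma bT0 {μ x : ℝ} : bT μ x 0 = (x/2) ^ μ / Real.Gamma (μ+1) := by
  simp [bT]

lemma bT1 {μ x : ℝ} (hμ : 0 ≤ μ) : bT μ x 1 = (x/2) ^ (2+μ) / ((μ+1) * Real.Gamma (μ+1)) := by
  have : Real.Gamma ((1:ℝ) + μ + 1) = (μ+1) * Real.Gamma (μ+1) := by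
    rw [show (1:ℝ) + μ + 1 = (μ+1) + 1 by ring, Real.Gamma_add_one (by positivity)]
  simp [bT, this]

lemma turan {ν x : ℝ} (hν : 0 ≤ ν) (hx : 0 < x) :
    (ν + 1) * (besselI (ν+1) x)^2 < (ν + 2) * (besselI ν x * besselI (ν+2) x) := by
  have h2 : (0:ℝ) < x / 2 := by linarith
  have hn0 := bT_norm_summable hν hx
  have hn1 := bT_norm_summable (μ := ν+1) (by linarith) hx
  have hn2 := bT_norm_summable (μ := ν+2) (by linarith) hx
  have hq : besselI ν x * besselI (ν+2) x
      = ∑' n, ∑ k ∈ range (n+1), bT ν x k * bT (ν+2) x (n-k) := by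
    rw [besselI_eq, besselI_eq]
    exact tsum_mul_tsum_eq_tsum_sum_range_of_summable_norm hn0 hn2
  have hq1 : (besselI (ν+1) x)^2
      = ∑' n, ∑ k ∈ range (n+1), bT (ν+1) x k * bT (ν+1) x (n-k) := by
    rw [sq, besselI_eq]
    exact tsum_mul_tsum_eq_tsum_sum_range_of_summable_norm hn1 hn1
  rw [hq, hq1, ← tsum_mul_left, ← tsum_mul_left]
  have hgsum : Summable (fun n => (ν+2) * ∑ k ∈ range (n+1), bT ν x k * bT (ν+2) x (n-k)) :=
    ((summable_norm_sum_mul_range_of_summable_norm hn0 hn2).of_norm).mul_left _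
  apply Summable.tsum_lt_tsum_of_nonneg (i := 1)
  · intro n
    apply mul_nonneg (by linarith)
    exact Finset.sum_nonneg fun k _ =>
      mul_nonneg (bT_pos (by linarith) hx k).le (bT_pos (by linarith) hx _).le
  · intro n
    have e : ∑ k ∈ range (n+1), bT ν x (n-k) * bT (ν+2) x k
        = ∑ k ∈ range (n+1), bT ν x k * bT (ν+2) x (n-k) := by
      rw [← Finset.sum_range_reflect (fun j => bT ν x j * bT (ν+2) x (n - j)) (n+1)]
      apply Finset.sum_congr rfl
      intro j hj
      have hj' : j ≤ n := Nat.lt_succ_iff.mp (Finset.mem_range.mp hj)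
      rw [show n + 1 - 1 - j = n - j by omega, Nat.sub_sub_self hj']
    have hs : 2*(ν+1) * ∑ k ∈ range (n+1), bT (ν+1) x k * bT (ν+1) x (n-k)
        ≤ (ν+2) * ∑ k ∈ range (n+1),
            (bT ν x k * bT (ν+2) x (n-k) + bT ν x (n-k) * bT (ν+2) x k) := by
      rw [Finset.mul_sum, Finset.mul_sum]
      exact Finset.sum_le_sum (fun k _ => pair' hν hx k (n-k))
    rw [Finset.sum_add_distrib, e] at hs
    nlinarith [hs]
  · -- strict at n = 1
    have hG : 0 < Real.Gamma (ν+1) := Real.Gamma_pos_of_pos (by linarith)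
    set G := Real.Gamma (ν+1) with hGdef
    have hG2 : Real.Gamma (ν+1+1) = (ν+1) * G := Real.Gamma_add_one (by positivity)
    have hG3 : Real.Gamma (ν+2+1) = (ν+2) * ((ν+1) * G) := by
      rw [show ν+2+1 = (ν+1+1)+1 by ring, Real.Gamma_add_one (by positivity), hG2]
      ring
    have hb00 : bT ν x 0 = (x/2) ^ ν / G := bT0
    have hb01 : bT (ν+1) x 0 = (x/2) ^ (ν+1) / ((ν+1) * G) := by
      rw [bT0, hG2]
    have hb02 : bT (ν+2) x 0 = (x/2) ^ (ν+2) / ((ν+2) * ((ν+1) * G)) := by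
      rw [bT0, hG3]
    have hb10 : bT ν x 1 = (x/2) ^ (2+ν) / ((ν+1) * G) := by
      rw [bT1 hν]
    have hb11 : bT (ν+1) x 1 = (x/2) ^ (2+(ν+1)) / ((ν+2) * ((ν+1) * G)) := by
      rw [bT1 (by linarith : (0:ℝ) ≤ ν+1), hG2, show ν+1+1 = ν+2 by ring]
    have hb12 : bT (ν+2) x 1 = (x/2) ^ (2+(ν+2)) / ((ν+3) * ((ν+2) * ((ν+1) * G))) := by
      rw [bT1 (by linarith : (0:ℝ) ≤ ν+2), hG3, show ν+2+1 = ν+3 by ring]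
    have hsum1 : ∀ (f : ℕ → ℝ), ∑ k ∈ range 2, f k = f 0 + f 1 := by
      intro f; rw [Finset.sum_range_succ, Finset.sum_range_succ, Finset.sum_range_zero, zero_add]
    show (ν+1) * ∑ k ∈ range 2, bT (ν+1) x k * bT (ν+1) x (1-k)
        < (ν+2) * ∑ k ∈ range 2, bT ν x k * bT (ν+2) x (1-k)
    rw [hsum1, hsum1]
    norm_num
    set y := (x/2) ^ (2*ν+4 : ℝ) with hy
    have hy0 : 0 < y := Real.rpow_pos_of_pos h2 _
    have hp1 : (x/2) ^ (ν+1) * (x/2) ^ (2+(ν+1)) = y := by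
      rw [← Real.rpow_add h2]; congr 1; ring
    have hp2 : (x/2) ^ ν * (x/2) ^ (2+(ν+2)) = y := by
      rw [← Real.rpow_add h2]; congr 1; ring
    have hp3 : (x/2) ^ (2+ν) * (x/2) ^ (ν+2) = y := by
      rw [← Real.rpow_add h2]; congr 1; ring
    have m1 : bT (ν+1) x 0 * bT (ν+1) x 1 = y / ((ν+1)*G*((ν+2)*((ν+1)*G))) := by
      rw [hb01, hb11, div_mul_div_comm, hp1]
    have m1' : bT (ν+1) x 1 * bT (ν+1) x 0 = y / ((ν+1)*G*((ν+2)*((ν+1)*G))) := by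
      rw [mul_comm, m1]
    have m2 : bT ν x 0 * bT (ν+2) x 1 = y / (G*((ν+3)*((ν+2)*((ν+1)*G)))) := by
      rw [hb00, hb12, div_mul_div_comm, hp2]
    have m3 : bT ν x 1 * bT (ν+2) x 0 = y / ((ν+1)*G*((ν+2)*((ν+1)*G))) := by
      rw [hb10, hb02, div_mul_div_comm, hp3]
    rw [m1, m1', m2, m3]
    have hdiff : (ν+2) * (y / (G*((ν+3)*((ν+2)*((ν+1)*G)))) + y / ((ν+1)*G*((ν+2)*((ν+1)*G))))
        - (ν+1) * (y / ((ν+1)*G*((ν+2)*((ν+1)*G))) + y / ((ν+1)*G*((ν+2)*((ν+1)*G))))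
        = 2 * y / ((ν+1)^2 * (ν+2) * (ν+3) * G^2) := by
      field_simp
      ring
    have hpos : 0 < 2 * y / ((ν+1)^2 * (ν+2) * (ν+3) * G^2) := by positivity
    linarith
  · exact hgsum

end BesselProof

theorem besselI_ratio_upper_bound_30 (ν x : ℝ) (hν : 0 ≤ ν) (hx : 0 < x) :
    besselI (ν - 1) x / besselI ν x <
      (ν - 2 + Real.sqrt ((ν + 2) ^ 2 + ((ν + 2) / (ν + 1)) * x ^ 2)) / x := by
  have hν1 : (0:ℝ) < ν + 1 := by linarith
  have h1 := BesselProof.besselI_recurrence hν hx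
  have h2 : x * besselI ν x = 2*(ν+1) * besselI (ν+1) x + x * besselI (ν+2) x := by
    have h := BesselProof.besselI_recurrence (ν := ν+1) (by linarith) hx
    rw [show ν+1-1 = ν by ring, show ν+1+1 = ν+2 by ring] at h
    exact h
  have hT := BesselProof.turan hν hx
  have ha : 0 < besselI ν x := BesselProof.besselI_pos hν hx
  have hb : 0 < besselI (ν+1) x := BesselProof.besselI_pos (by linarith) hx
  have hd : 0 < besselI (ν+2) x := BesselProof.besselI_pos (by linarith) hx
  set a := besselI ν x with hadef
  set b := besselI (ν+1) x with hbdef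
  set d := besselI (ν+2) x with hddef
  set S := (ν + 2) ^ 2 + ((ν + 2) / (ν + 1)) * x ^ 2 with hSdef
  have hS0 : 0 ≤ S := by positivity
  rw [div_lt_div_iff₀ ha hx, mul_comm (besselI (ν-1) x) x, h1]
  -- goal : 2*ν*a + x*b < (ν - 2 + √S) * a
  have hxd : x*d = x*a - 2*(ν+1)*b := by linarith
  have e4 : (ν+2)*(x^2*(a*d)) = (ν+2)*(x^2*a^2) - 2*(ν+1)*(ν+2)*(x*(a*b)) := by
    linear_combination ((ν+2)*x*a) * hxd
  have e5 : x^2*((ν+1)*b^2) < x^2*((ν+2)*(a*d)) :=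
    mul_lt_mul_of_pos_left hT (by positivity)
  have hsq' : (ν+1)*(((ν+2)*a + x*b)^2) < ((ν+1)*(ν+2)^2)*a^2 + (ν+2)*x^2*a^2 := by
    nlinarith [e4, e5]
  have hre : (ν+1)*(S*a^2) = ((ν+1)*(ν+2)^2)*a^2 + (ν+2)*x^2*a^2 := by
    rw [hSdef]
    field_simp
  have hsq : ((ν+2)*a + x*b)^2 < S*a^2 := by
    have := hsq'
    rw [← hre] at this
    exact lt_of_mul_lt_mul_left this hν1.le
  have hnn : 0 ≤ (ν+2)*a + x*b := by
    have := mul_pos hx hb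
    nlinarith [ha]
  have hkey : (ν+2)*a + x*b < Real.sqrt S * a := by
    have h' : (ν+2)*a + x*b < Real.sqrt (S*a^2) := (Real.lt_sqrt hnn).mpr hsq
    rw [Real.sqrt_mul hS0, Real.sqrt_sq ha.le] at h'
    exact h'
  nlinarith [hkey, ha]
end

section
/- Define, for real ν and x > 0, B^{(2,1)}(x) = (ν − 1 + √((ν + 1)² + x²))/x, B^{(0,3)}(x) = (ν − 1/2 + √(ν² − 1/4 + x²))/x, B^{(3,0)}(x) = (ν − 2 + √((ν + 2)² + ((ν + 2)/(ν + 1))·x²))/x and B^{(1,2)}(x) = (ν − 1/2 + √((ν + 1/2)² + x²))/x. Then: (i) for ν ≥ 1/2 and x > 0, B^{(2,1)}(x) > B^{(0,3)}(x) if and only if x < x_l := √(3(ν + 1/2)(ν + 5/6)) (so among these two lower bounds for I_{ν−1}(x)/I_ν(x), B^{(2,1)} is sharper for x < x_l and B^{(0,3)} is sharper for x > x_l); (ii) for ν ≥ 0 and x > 0, B^{(3,0)}(x) < B^{(1,2)}(x) if and only if x < x_u := √(3(ν + 1)(ν + 2)) (so among these two upper bounds for I_{ν−1}(x)/I_ν(x),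 B^{(3,0)} is sharper for x < x_u and B^{(1,2)} is sharper for x > x_u). -/
set_option maxHeartbeats 1000000 in
/-- Comparison of the best algebraic bounds for `I_{ν-1}(x)/I_ν(x)` at `x = 0` and `x = ∞`:
`B^{(2,1)}` vs `B^{(0,3)}` (lower bounds) and `B^{(3,0)}` vs `B^{(1,2)}` (upper bounds). -/
theorem best_bounds_comparison (ν x : ℝ) (hx : 0 < x) :
    (1 / 2 ≤ ν →
      ((ν - 1 + Real.sqrt ((ν + 1) ^ 2 + x ^ 2)) / x >
          (ν - 1 / 2 + Real.sqrt (ν ^ 2 - 1 / 4 + x ^ 2)) / x ↔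
        x < Real.sqrt (3 * (ν + 1 / 2) * (ν + 5 / 6)))) ∧
    (0 ≤ ν →
      ((ν - 2 + Real.sqrt ((ν + 2) ^ 2 + ((ν + 2) / (ν + 1)) * x ^ 2)) / x <
          (ν - 1 / 2 + Real.sqrt ((ν + 1 / 2) ^ 2 + x ^ 2)) / x ↔
        x < Real.sqrt (3 * (ν + 1) * (ν + 2)))) := by
  constructor
  · intro hν
    rw [gt_iff_lt, div_lt_div_iff_of_pos_right hx, Real.lt_sqrt hx.le]
    have hB0 : (0:ℝ) ≤ ν ^ 2 - 1/4 + x ^ 2 := by nlinarith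
    have hA0 : (0:ℝ) ≤ (ν+1)^2 + x^2 := by positivity
    set sA := Real.sqrt ((ν+1)^2 + x^2) with hsA
    set sB := Real.sqrt (ν^2 - 1/4 + x^2) with hsB
    have hA : sA^2 = (ν+1)^2 + x^2 := Real.sq_sqrt hA0
    have hB : sB^2 = ν^2 - 1/4 + x^2 := Real.sq_sqrt hB0
    have hAnn : 0 ≤ sA := Real.sqrt_nonneg _
    have hBnn : 0 ≤ sB := Real.sqrt_nonneg _
    constructor
    · intro h
      have h1 : sB + 1/2 < sA := by linarith
      have h2 : (sB + 1/2)^2 < sA^2 := by nlinarith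
      have h3 : sB < 2*ν + 1 := by nlinarith
      nlinarith
    · intro h
      have h3 : sB^2 < (2*ν+1)^2 := by nlinarith
      have h4 : sB < 2*ν+1 := by nlinarith
      have h5 : (sB + 1/2)^2 < sA^2 := by nlinarith
      have h6 : sB + 1/2 < sA := lt_of_pow_lt_pow_left₀ 2 hAnn h5
      linarith
  · intro hν
    rw [div_lt_div_iff_of_pos_right hx, Real.lt_sqrt hx.le]
    have hν1 : (0:ℝ) < ν + 1 := by linarith
    have hA0 : (0:ℝ) ≤ (ν+2)^2 + ((ν+2)/(ν+1))*x^2 := by positivity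
    have hB0 : (0:ℝ) ≤ (ν+1/2)^2 + x^2 := by positivity
    set sA := Real.sqrt ((ν+2)^2 + ((ν+2)/(ν+1))*x^2) with hsA
    set sB := Real.sqrt ((ν+1/2)^2 + x^2) with hsB
    have hA : sA^2 * (ν+1) = (ν+1)*(ν+2)^2 + (ν+2)*x^2 := by
      rw [Real.sq_sqrt hA0]; field_simp
    have hB : sB^2 = (ν+1/2)^2 + x^2 := Real.sq_sqrt hB0
    have hAnn : 0 ≤ sA := Real.sqrt_nonneg _
    have hBnn : 0 ≤ sB := Real.sqrt_nonneg _
    have hx2 : 0 < x^2 := by positivity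
    constructor
    · intro h
      have h1 : sA < sB + 3/2 := by linarith
      have h2 : sA^2 < (sB + 3/2)^2 := by
        have := mul_lt_mul'' h1 h1 hAnn hAnn; nlinarith [this]
      have h2' : sA^2*(ν+1) < (sB + 3/2)^2*(ν+1) :=
        mul_lt_mul_of_pos_right h2 hν1
      have h3 : 3*(ν+1)*(ν+1/2) + x^2 < 3*(ν+1)*sB := by nlinarith [h2', hA, hB]
      have hL : 0 < 3*(ν+1)*(ν+1/2) + x^2 := by positivity
      have h4 := mul_lt_mul'' h3 h3 hL.le hL.le
      nlinarith [h4, hB, hx2]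
    · intro h
      have hB9 : 9*(ν+1)^2*sB^2 = 9*(ν+1)^2*((ν+1/2)^2+x^2) := by rw [hB]
      have key : (3*(ν+1)*(ν+1/2) + x^2)^2 < (3*(ν+1)*sB)^2 := by
        nlinarith [hB9, mul_pos hx2 (sub_pos.mpr h)]
      have h3 : 3*(ν+1)*(ν+1/2) + x^2 < 3*(ν+1)*sB :=
        lt_of_pow_lt_pow_left₀ 2 (by positivity) key
      have h2 : sA^2 < (sB + 3/2)^2 := by nlinarith
      have h6 : sA < sB + 3/2 := lt_of_pow_lt_pow_left₀ 2 (by linarith) h2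
      linarith
end
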